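/- arXiv:1911.05416 — 3 statements merged into one kernel-verified Lean document; each statement's English description precedes it below -/
import Mathlib

section
/- Let φ be a 3-SAT formula and let R be the discrete instance constructed from φ as described. If φ is satisfiable, then R admits a contiguous allocation (pairwise disjoint sets of consecutive items, one per agent, covering all items) in which every agent receives exactly two items she values and, for every pair of distinct agents A and B, the set allocated to A contains at most two items valued by B; in particular this allocation is envy-free. -/
/-- Satisfiability of the 3-SAT formula `φ` (`φ i k = (j, pol)` means the `k`-th literal
of clause `i` is `x_j` if `pol = true` and `¬ x_j` if `pol = false`). -/
def SatFormula (m n : ℕ) (φ : Fin m → Fin 3 → Fin n × Bool) : Prop :=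
  ∃ a : Fin n → Bool, ∀ i : Fin m, ∃ k : Fin 3, a (φ i k).1 = (φ i k).2

/-- Agents of the discrete instance `R` built from `φ`: clause agents `C_i^k = Sum.inl (i,k)`
and variable agents `X_j = Sum.inr (j, true)`, `X̄_j = Sum.inr (j, false)`. -/
abbrev RAgent (m n : ℕ) := (Fin m × Fin 3) ⊕ (Fin n × Bool)

/-- Number of clause-literal occurrences of the positive literal `x_j` in `φ`. -/
def posOcc (m n : ℕ) (φ : Fin m → Fin 3 → Fin n × Bool) (j : Fin n) : ℕ :=
  (Finset.univ.filter fun p : Fin m × Fin 3 => φ p.1 p.2 = (j, true)).card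

/-- Number of clause-literal occurrences of the variable `x_j` (positive or negative). -/
def occCount (m n : ℕ) (φ : Fin m → Fin 3 → Fin n × Bool) (j : Fin n) : ℕ :=
  (Finset.univ.filter fun p : Fin m × Fin 3 => (φ p.1 p.2).1 = j).card

/-- Item index at which the Variable-Gadget of variable `x_j` starts (the Variable-Gadget
of `x_j` has `5 + 2 * occCount` items and the gadgets follow the `4m` clause items). -/
def varStartR (m n : ℕ) (φ : Fin m → Fin 3 → Fin n × Bool) (j : Fin n) : ℕ :=
  4 * m + ∑ j' ∈ Finset.univ.filter (fun j' : Fin n => j' < j), (5 + 2 * occCount m n φ j')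

/-- Rank (from the left) of the clause-literal occurrence `p` among the occurrences of the
same literal, ordering occurrences by clause index and then literal position. -/
def litRank (m n : ℕ) (φ : Fin m → Fin 3 → Fin n × Bool) (p : Fin m × Fin 3) : ℕ :=
  (Finset.univ.filter fun p' : Fin m × Fin 3 =>
    φ p'.1 p'.2 = φ p.1 p.2 ∧ 3 * p'.1.val + p'.2.val < 3 * p.1.val + p.2.val).card

/-- Index of the first of the two items valued only by the clause agent `p` inside the
Variable-Gadget of its literal's variable. -/
def pairStart (m n : ℕ) (φ : Fin m → Fin 3 → Fin n × Bool) (p : Fin m × Fin 3) : ℕ :=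
  if (φ p.1 p.2).2 then
    varStartR m n φ (φ p.1 p.2).1 + 3 + 2 * litRank m n φ p
  else
    varStartR m n φ (φ p.1 p.2).1 + 4 + 2 * posOcc m n φ (φ p.1 p.2).1 + 2 * litRank m n φ p

/-- Valued sets of the instance `R` built from `φ` (with `4m` clause items followed by the
Variable-Gadgets, `10m + 5n` items in total): clause agent `C_i^k` values the 4 items of the
Clause-Gadget of `C_i` and its 2 items inside the Variable-Gadget of its literal's variable;
`X_j` values the items at offsets `0, 1, 2, 3 + 2·posOcc` of the Variable-Gadget of `x_j`,
and `X̄_j` those at offsets `0, 1, 3 + 2·posOcc, 4 + 2·occCount`. -/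
def RV (m n : ℕ) (φ : Fin m → Fin 3 → Fin n × Bool) :
    RAgent m n → Finset (Fin (10 * m + 5 * n))
  | .inl p => Finset.univ.filter fun t =>
      (4 * p.1.val ≤ t.val ∧ t.val < 4 * p.1.val + 4) ∨
      t.val = pairStart m n φ p ∨ t.val = pairStart m n φ p + 1
  | .inr (j, true) => Finset.univ.filter fun t =>
      t.val = varStartR m n φ j ∨ t.val = varStartR m n φ j + 1 ∨
      t.val = varStartR m n φ j + 2 ∨
      t.val = varStartR m n φ j + 3 + 2 * posOcc m n φ j
  | .inr (j, false) => Finset.univ.filter fun t =>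
      t.val = varStartR m n φ j ∨ t.val = varStartR m n φ j + 1 ∨
      t.val = varStartR m n φ j + 3 + 2 * posOcc m n φ j ∨
      t.val = varStartR m n φ j + 4 + 2 * occCount m n φ j

/-- `owner` is a contiguous allocation of the items to the agents: each agent's set of
items is a (possibly empty) set of consecutive items, and all items are allocated. -/
def ContigAlloc {M : ℕ} {A : Type*} (owner : Fin M → A) : Prop :=
  ∀ (a : A) (t₁ t₂ t₃ : Fin M), t₁ ≤ t₂ → t₂ ≤ t₃ →
    owner t₁ = a → owner t₃ = a → owner t₂ = a

open Classical in
/-- The (normalized) value that agent `a` assigns to the bundle received by agent `b`. -/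
noncomputable def discVal {M : ℕ} {A : Type*} (V : A → Finset (Fin M))
    (owner : Fin M → A) (a b : A) : ℝ :=
  (((V a).filter fun t => owner t = b).card : ℝ) / ((V a).card : ℝ)

namespace Stmt14

open Finset

variable (m n : ℕ) (φ : Fin m → Fin 3 → Fin n × Bool) (σ : Fin n → Bool) (K : Fin m → Fin 3)

/-- occurrences of the negative literal of x_j -/
def negOcc (j : Fin n) : ℕ :=
  (Finset.univ.filter fun p : Fin m × Fin 3 => φ p.1 p.2 = (j, false)).card

/-- length of the variable gadget of x_j -/
def glen (j : Fin n) : ℕ := 5 + 2 * occCount m n φ j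

/-- witnesses whose literal's variable is x_j -/
def WitS (j : Fin n) : Finset (Fin m × Fin 3) :=
  Finset.univ.filter fun p => p.2 = K p.1 ∧ (φ p.1 p.2).1 = j

/-- start of the witness region in gadget j -/
def rS (j : Fin n) : ℕ :=
  if σ j then varStartR m n φ j + 2 else varStartR m n φ j + 4 + 2 * posOcc m n φ j

/-- end (exclusive) of the witness region in gadget j -/
def rE (j : Fin n) : ℕ :=
  if σ j then varStartR m n φ j + 3 + 2 * posOcc m n φ j
  else varStartR m n φ j + 5 + 2 * occCount m n φ j

open Classical in
/-- left endpoint of the interval of witness p -/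
noncomputable def loW (p : Fin m × Fin 3) : ℕ :=
  if ((WitS m n φ K (φ p.1 p.2).1).filter
      fun p' => pairStart m n φ p' < pairStart m n φ p).Nonempty
  then pairStart m n φ p else rS m n φ σ (φ p.1 p.2).1

/-- right endpoint (exclusive) of the interval of witness p -/
noncomputable def hiW (p : Fin m × Fin 3) : ℕ :=
  (insert (rE m n φ σ (φ p.1 p.2).1)
    (((WitS m n φ K (φ p.1 p.2).1).filter
      fun p' => pairStart m n φ p < pairStart m n φ p').image (pairStart m n φ))).min'
    (insert_nonempty _ _)

def nw1 (i : Fin m) : Fin 3 := if K i = 0 then 1 else 0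

def nwSlot (i : Fin m) (kk : Fin 3) : ℕ := if kk = nw1 m K i then 0 else 1

open Classical in
noncomputable def lo : RAgent m n → ℕ
  | .inl p => if p.2 = K p.1 then loW m n φ σ K p else 4 * p.1.val + 2 * nwSlot m K p.1 p.2
  | .inr (j, true) =>
      if (WitS m n φ K j).Nonempty ∧ σ j then varStartR m n φ j else varStartR m n φ j + 2
  | .inr (j, false) =>
      if (WitS m n φ K j).Nonempty ∧ σ j then varStartR m n φ j + 3 + 2 * posOcc m n φ j
      else varStartR m n φ j

open Classical in
noncomputable def hi : RAgent m n → ℕ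
  | .inl p => if p.2 = K p.1 then hiW m n φ σ K p
      else 4 * p.1.val + 2 * nwSlot m K p.1 p.2 + 2
  | .inr (j, true) =>
      if (WitS m n φ K j).Nonempty ∧ σ j then varStartR m n φ j + 2
      else if (WitS m n φ K j).Nonempty then varStartR m n φ j + 4 + 2 * posOcc m n φ j
      else varStartR m n φ j + 5 + 2 * occCount m n φ j
  | .inr (j, false) =>
      if (WitS m n φ K j).Nonempty ∧ σ j then varStartR m n φ j + 5 + 2 * occCount m n φ j
      else varStartR m n φ j + 2

/-! ### basic arithmetic lemmas -/

lemma occ_split (j : Fin n) :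
    occCount m n φ j = posOcc m n φ j + negOcc m n φ j := by 
  unfold occCount posOcc negOcc
  rw [← card_union_of_disjoint]
  · congr 1
    ext p
    simp only [mem_union, mem_filter, mem_univ, true_and]
    constructor
    · intro h
      rcases hb : (φ p.1 p.2).2 with _ | _
      · right; rw [← h, ← hb]
      · left; rw [← h, ← hb]
    · rintro (h | h) <;> rw [h]
  · simp only [disjoint_left, mem_filter, mem_univ, true_and]
    rintro p h1 h2
    rw [h1] at h2
    simp at h2

lemma pos_le_occ (j : Fin n) : posOcc m n φ j ≤ occCount m n φ j := by 
  apply card_le_card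
  intro p hp
  simp only [mem_filter, mem_univ, true_and] at *
  rw [hp]

lemma sum_glen : ∑ j, glen m n φ j = 5 * n + 6 * m := by 
  unfold glen
  rw [Finset.sum_add_distrib, Finset.sum_const, ← Finset.mul_sum]
  have h3 : ∑ j, occCount m n φ j = 3 * m := by
    unfold occCount
    rw [← Finset.card_eq_sum_card_fiberwise (f := fun p : Fin m × Fin 3 => (φ p.1 p.2).1)
      (by intro x _; exact mem_univ _)]
    simp [mul_comm]
  rw [h3]
  simp only [card_univ, Fintype.card_fin, smul_eq_mul]
  ring

lemma varStart_succ (j j' : Fin n) (h : j'.val = j.val + 1) :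
    varStartR m n φ j' = varStartR m n φ j + glen m n φ j := by 
  unfold varStartR glen
  have hset : (Finset.univ.filter (fun x : Fin n => x < j')) =
      insert j (Finset.univ.filter (fun x : Fin n => x < j)) := by
    ext x
    simp only [mem_insert, mem_filter, mem_univ, true_and, Fin.lt_def, Fin.ext_iff]
    omega
  rw [hset, Finset.sum_insert (by simp only [mem_filter, mem_univ, true_and]; exact lt_irrefl j)]
  ring

lemma varStart_last (j : Fin n) (h : j.val + 1 = n) :
    varStartR m n φ j + glen m n φ j = 10 * m + 5 * n := by 
  have hset : insert j (Finset.univ.filter (fun x : Fin n => x < j)) = Finset.univ := by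
    ext x
    simp only [mem_insert, mem_filter, mem_univ, true_and, Fin.lt_def, Fin.ext_iff, iff_true]
    have := x.isLt
    omega
  have h1 : varStartR m n φ j + glen m n φ j =
      4 * m + ∑ j' ∈ insert j (Finset.univ.filter (fun x : Fin n => x < j)),
        (5 + 2 * occCount m n φ j') := by
    rw [Finset.sum_insert (by simp only [mem_filter, mem_univ, true_and]; exact lt_irrefl j)]
    unfold varStartR glen
    ring
  rw [h1, hset]
  have := sum_glen m n φ
  unfold glen at this
  omega

lemma varStart_add_le (j : Fin n) :
    varStartR m n φ j + glen m n φ j ≤ 10 * m + 5 * n := by 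
  have h1 : varStartR m n φ j + glen m n φ j =
      4 * m + ∑ j' ∈ insert j (Finset.univ.filter (fun x : Fin n => x < j)),
        (5 + 2 * occCount m n φ j') := by
    rw [Finset.sum_insert (by simp only [mem_filter, mem_univ, true_and]; exact lt_irrefl j)]
    unfold varStartR glen
    ring
  have h2 : ∑ j' ∈ insert j (Finset.univ.filter (fun x : Fin n => x < j)),
        (5 + 2 * occCount m n φ j') ≤ ∑ j', (5 + 2 * occCount m n φ j') := by
    apply Finset.sum_le_sum_of_subset
    intro x _; exact mem_univ _
  have := sum_glen m n φ
  unfold glen at this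
  omega

lemma varStart_mono (j j' : Fin n) (h : j < j') :
    varStartR m n φ j + glen m n φ j ≤ varStartR m n φ j' := by 
  have h1 : varStartR m n φ j + glen m n φ j =
      4 * m + ∑ j' ∈ insert j (Finset.univ.filter (fun x : Fin n => x < j)),
        (5 + 2 * occCount m n φ j') := by
    rw [Finset.sum_insert (by simp only [mem_filter, mem_univ, true_and]; exact lt_irrefl j)]
    unfold varStartR glen
    ring
  rw [h1]
  unfold varStartR
  have h2 : insert j (Finset.univ.filter (fun x : Fin n => x < j)) ⊆
      Finset.univ.filter (fun x : Fin n => x < j') := by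
    intro x hx
    simp only [mem_insert, mem_filter, mem_univ, true_and, Fin.lt_def, Fin.ext_iff] at hx ⊢
    rw [Fin.lt_def] at h
    omega
  exact Nat.add_le_add_left (Finset.sum_le_sum_of_subset h2) _

lemma le_varStart (j : Fin n) : 4 * m ≤ varStartR m n φ j := Nat.le_add_right _ _

lemma varStart_zero (j : Fin n) (h : j.val = 0) : varStartR m n φ j = 4 * m := by 
  unfold varStartR
  have hset : (Finset.univ.filter (fun x : Fin n => x < j)) = ∅ := by
    ext x
    simp only [mem_filter, mem_univ, true_and, Fin.lt_def, notMem_empty, iff_false]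
    omega
  rw [hset]
  simp

lemma exists_gadget (hn : 0 < n) (t : ℕ) (h4 : 4 * m ≤ t) (hM : t < 10 * m + 5 * n) :
    ∃ j : Fin n, varStartR m n φ j ≤ t ∧ t < varStartR m n φ j + glen m n φ j := by 
  classical
  set S := Finset.univ.filter (fun j : Fin n => varStartR m n φ j ≤ t) with hS
  have hS0 : (⟨0, hn⟩ : Fin n) ∈ S := by
    simp only [hS, mem_filter, mem_univ, true_and]
    rw [varStart_zero m n φ _ rfl]
    exact h4
  have hSne : S.Nonempty := ⟨_, hS0⟩
  set j := S.max' hSne with hj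
  have hjS : j ∈ S := S.max'_mem hSne
  have hjle : varStartR m n φ j ≤ t := by
    simpa only [hS, mem_filter, mem_univ, true_and] using hjS
  refine ⟨j, hjle, ?_⟩
  by_contra hcon
  push_neg at hcon
  rcases Nat.lt_or_ge (j.val + 1) n with hlt | hge
  · set j' : Fin n := ⟨j.val + 1, hlt⟩ with hj'
    have hsucc := varStart_succ m n φ j j' rfl
    have hj'S : j' ∈ S := by
      simp only [hS, mem_filter, mem_univ, true_and]
      omega
    have := S.le_max' j' hj'S
    rw [← hj] at this
    rw [Fin.le_def] at this
    simp [hj'] at this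
  · have : j.val + 1 = n := by have := j.isLt; omega
    have := varStart_last m n φ j this
    omega

/-! ### litRank and pairStart lemmas -/

lemma key_inj (p p' : Fin m × Fin 3)
    (h : 3 * p.1.val + p.2.val = 3 * p'.1.val + p'.2.val) : p = p' := by
  have h1 : p.2.val < 3 := p.2.isLt
  have h2 : p'.2.val < 3 := p'.2.isLt
  have h3 : p.1.val = p'.1.val ∧ p.2.val = p'.2.val := by omega
  exact Prod.ext_iff.mpr ⟨Fin.ext h3.1, Fin.ext h3.2⟩

lemma litRank_lt (p : Fin m × Fin 3) (j : Fin n) (b : Bool) (hp : φ p.1 p.2 = (j, b)) :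
    litRank m n φ p < (Finset.univ.filter fun p' : Fin m × Fin 3 => φ p'.1 p'.2 = (j, b)).card := by
  
  unfold litRank
  have hsub : (Finset.univ.filter fun p' : Fin m × Fin 3 =>
      φ p'.1 p'.2 = φ p.1 p.2 ∧ 3 * p'.1.val + p'.2.val < 3 * p.1.val + p.2.val) ⊆
      (Finset.univ.filter fun p' : Fin m × Fin 3 => φ p'.1 p'.2 = (j, b)) := by
    intro q hq
    simp only [mem_filter, mem_univ, true_and] at hq ⊢
    rw [hq.1, hp]
  refine Finset.card_lt_card ((Finset.ssubset_iff_of_subset hsub).mpr ⟨p, ?_, ?_⟩)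
  · simp only [mem_filter, mem_univ, true_and]; exact hp
  · simp

lemma litRank_strictMono (p p' : Fin m × Fin 3) (hsame : φ p.1 p.2 = φ p'.1 p'.2)
    (h : 3 * p.1.val + p.2.val < 3 * p'.1.val + p'.2.val) :
    litRank m n φ p < litRank m n φ p' := by 
  unfold litRank
  have hsub : (Finset.univ.filter fun q : Fin m × Fin 3 =>
      φ q.1 q.2 = φ p.1 p.2 ∧ 3 * q.1.val + q.2.val < 3 * p.1.val + p.2.val) ⊆
      (Finset.univ.filter fun q : Fin m × Fin 3 =>
      φ q.1 q.2 = φ p'.1 p'.2 ∧ 3 * q.1.val + q.2.val < 3 * p'.1.val + p'.2.val) := by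
    intro q hq
    simp only [mem_filter, mem_univ, true_and] at hq ⊢
    exact ⟨hq.1.trans hsame, hq.2.trans h⟩
  refine Finset.card_lt_card ((Finset.ssubset_iff_of_subset hsub).mpr ⟨p, ?_, ?_⟩)
  · simp only [mem_filter, mem_univ, true_and]; exact ⟨hsame, h⟩
  · simp

lemma pairStart_gap (p p' : Fin m × Fin 3) (hsame : φ p.1 p.2 = φ p'.1 p'.2) (hne : p ≠ p') :
    pairStart m n φ p + 2 ≤ pairStart m n φ p' ∨ pairStart m n φ p' + 2 ≤ pairStart m n φ p := by
  
  rcases Nat.lt_trichotomy (3 * p.1.val + p.2.val) (3 * p'.1.val + p'.2.val) with h | h | h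
  · left
    have hr := litRank_strictMono m n φ p p' hsame h
    unfold pairStart
    rw [hsame]
    split_ifs <;> omega
  · exact absurd (key_inj m p p' h) hne
  · right
    have hr := litRank_strictMono m n φ p' p hsame.symm h
    unfold pairStart
    rw [hsame]
    split_ifs <;> omega

lemma pairStart_in_gadget (p : Fin m × Fin 3) :
    varStartR m n φ (φ p.1 p.2).1 + 3 ≤ pairStart m n φ p ∧
    pairStart m n φ p + 2 ≤ varStartR m n φ (φ p.1 p.2).1 + glen m n φ (φ p.1 p.2).1 := by 
  have ho := occ_split m n φ (φ p.1 p.2).1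
  have hpo := pos_le_occ m n φ (φ p.1 p.2).1
  unfold glen
  cases hb : (φ p.1 p.2).2
  case false =>
    have hr : litRank m n φ p < negOcc m n φ (φ p.1 p.2).1 :=
      litRank_lt m n φ p (φ p.1 p.2).1 false (by rw [← hb])
    unfold pairStart
    rw [hb]
    simp only [Bool.false_eq_true, if_false]
    omega
  case true =>
    have hr : litRank m n φ p < posOcc m n φ (φ p.1 p.2).1 :=
      litRank_lt m n φ p (φ p.1 p.2).1 true (by rw [← hb])
    unfold pairStart
    rw [hb]
    simp only [if_true]
    omega

/-! ### witness lemmas -/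

lemma mem_WitS_iff (j : Fin n) (p : Fin m × Fin 3) :
    p ∈ WitS m n φ K j ↔ p.2 = K p.1 ∧ (φ p.1 p.2).1 = j := by
  simp [WitS]

lemma WitS_lit (hK : ∀ i, σ (φ i (K i)).1 = (φ i (K i)).2)
    (j : Fin n) (p : Fin m × Fin 3) (hp : p ∈ WitS m n φ K j) :
    φ p.1 p.2 = (j, σ j) := by
  obtain ⟨h1, h2⟩ := (mem_WitS_iff m n φ K j p).mp hp
  have h3 := hK p.1
  rw [← h1] at h3
  rw [h2] at h3
  exact Prod.ext_iff.mpr ⟨h2, h3.symm⟩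

lemma pairStart_bounds_wit (hK : ∀ i, σ (φ i (K i)).1 = (φ i (K i)).2)
    (j : Fin n) (p : Fin m × Fin 3) (hp : p ∈ WitS m n φ K j) :
    rS m n φ σ j ≤ pairStart m n φ p ∧ pairStart m n φ p + 2 ≤ rE m n φ σ j := by
  have hlit := WitS_lit m n φ σ K hK j p hp
  have hr := litRank_lt m n φ p j (σ j) hlit
  have ho := occ_split m n φ j
  unfold rS rE pairStart
  rw [hlit]
  cases hσ : σ j
  · rw [hσ] at hr
    have hr' : litRank m n φ p < negOcc m n φ j := hr
    simp only [Bool.false_eq_true, if_false]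
    omega
  · rw [hσ] at hr
    have hr' : litRank m n φ p < posOcc m n φ j := hr
    simp only [if_true]
    omega

lemma rS_bounds (j : Fin n) :
    varStartR m n φ j + 2 ≤ rS m n φ σ j ∧ rS m n φ σ j ≤ rE m n φ σ j ∧
    rE m n φ σ j ≤ varStartR m n φ j + glen m n φ j := by
  have ho := occ_split m n φ j
  have hpo := pos_le_occ m n φ j
  unfold rS rE glen
  cases hσ : σ j <;> simp only [Bool.false_eq_true, if_false, if_true] <;> omega

lemma loW_le_pair (hK : ∀ i, σ (φ i (K i)).1 = (φ i (K i)).2)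
    (j : Fin n) (p : Fin m × Fin 3) (hp : p ∈ WitS m n φ K j) :
    loW m n φ σ K p ≤ pairStart m n φ p := by
  have hj : (φ p.1 p.2).1 = j := ((mem_WitS_iff m n φ K j p).mp hp).2
  unfold loW
  rw [hj]
  split_ifs with h
  · exact le_refl _
  · exact (pairStart_bounds_wit m n φ σ K hK j p hp).1

lemma rS_le_loW (hK : ∀ i, σ (φ i (K i)).1 = (φ i (K i)).2)
    (j : Fin n) (p : Fin m × Fin 3) (hp : p ∈ WitS m n φ K j) :
    rS m n φ σ j ≤ loW m n φ σ K p := by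
  have hj : (φ p.1 p.2).1 = j := ((mem_WitS_iff m n φ K j p).mp hp).2
  unfold loW
  rw [hj]
  split_ifs with h
  · exact (pairStart_bounds_wit m n φ σ K hK j p hp).1
  · exact le_refl _

lemma pair_add_two_le_hiW (hK : ∀ i, σ (φ i (K i)).1 = (φ i (K i)).2)
    (j : Fin n) (p : Fin m × Fin 3) (hp : p ∈ WitS m n φ K j) :
    pairStart m n φ p + 2 ≤ hiW m n φ σ K p := by
  have hj : (φ p.1 p.2).1 = j := ((mem_WitS_iff m n φ K j p).mp hp).2
  unfold hiW
  simp only [hj]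
  apply Finset.le_min'
  intro y hy
  rcases Finset.mem_insert.mp hy with rfl | hy'
  · exact (pairStart_bounds_wit m n φ σ K hK j p hp).2
  · obtain ⟨q, hq, rfl⟩ := Finset.mem_image.mp hy'
    obtain ⟨hqW, hlt⟩ := Finset.mem_filter.mp hq
    have hql := WitS_lit m n φ σ K hK j q hqW
    have hpl := WitS_lit m n φ σ K hK j p hp
    have hne : p ≠ q := by rintro rfl; exact lt_irrefl _ hlt
    rcases pairStart_gap m n φ p q (hpl.trans hql.symm) hne with h | h
    · exact h
    · omega

lemma hiW_le_rE (j : Fin n) (p : Fin m × Fin 3) (hp : p ∈ WitS m n φ K j) :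
    hiW m n φ σ K p ≤ rE m n φ σ j := by
  have hj : (φ p.1 p.2).1 = j := ((mem_WitS_iff m n φ K j p).mp hp).2
  unfold hiW
  simp only [hj]
  exact Finset.min'_le _ _ (Finset.mem_insert_self _ _)

lemma hiW_cases (j : Fin n) (p : Fin m × Fin 3) (hp : p ∈ WitS m n φ K j) :
    hiW m n φ σ K p = rE m n φ σ j ∨
    ∃ q ∈ WitS m n φ K j, pairStart m n φ p < pairStart m n φ q ∧
      hiW m n φ σ K p = pairStart m n φ q := by
  have hj : (φ p.1 p.2).1 = j := ((mem_WitS_iff m n φ K j p).mp hp).2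
  have hmem : hiW m n φ σ K p ∈ insert (rE m n φ σ j)
      (((WitS m n φ K j).filter fun q => pairStart m n φ p < pairStart m n φ q).image
        (pairStart m n φ)) := by
    unfold hiW
    simp only [hj]
    exact Finset.min'_mem _ _
  rcases Finset.mem_insert.mp hmem with h | h
  · exact Or.inl h
  · right
    obtain ⟨q, hq, he⟩ := Finset.mem_image.mp h
    obtain ⟨hqW, hlt⟩ := Finset.mem_filter.mp hq
    exact ⟨q, hqW, hlt, he.symm⟩

lemma wit_disjoint (j : Fin n) (p q : Fin m × Fin 3) (hp : p ∈ WitS m n φ K j)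
    (hq : q ∈ WitS m n φ K j) (hlt : pairStart m n φ p < pairStart m n φ q) :
    hiW m n φ σ K p ≤ loW m n φ σ K q := by
  have hjp : (φ p.1 p.2).1 = j := ((mem_WitS_iff m n φ K j p).mp hp).2
  have hjq : (φ q.1 q.2).1 = j := ((mem_WitS_iff m n φ K j q).mp hq).2
  have h1 : hiW m n φ σ K p ≤ pairStart m n φ q := by
    unfold hiW
    simp only [hjp]
    apply Finset.min'_le
    apply Finset.mem_insert_of_mem
    exact Finset.mem_image_of_mem _ (Finset.mem_filter.mpr ⟨hq, hlt⟩)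
  have h2 : loW m n φ σ K q = pairStart m n φ q := by
    unfold loW
    rw [hjq]
    rw [if_pos]
    exact ⟨p, Finset.mem_filter.mpr ⟨hp, hlt⟩⟩
  omega

lemma wit_cover (hK : ∀ i, σ (φ i (K i)).1 = (φ i (K i)).2)
    (j : Fin n) (hW : (WitS m n φ K j).Nonempty) (v : ℕ)
    (h1 : rS m n φ σ j ≤ v) (h2 : v < rE m n φ σ j) :
    ∃ p ∈ WitS m n φ K j, loW m n φ σ K p ≤ v ∧ v < hiW m n φ σ K p := by
  classical
  set T := (WitS m n φ K j).filter (fun q => pairStart m n φ q ≤ v) with hT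
  rcases T.eq_empty_or_nonempty with hTe | hTne
  · obtain ⟨p, hpW, hmin⟩ := Finset.exists_min_image (WitS m n φ K j) (pairStart m n φ) hW
    have hj : (φ p.1 p.2).1 = j := ((mem_WitS_iff m n φ K j p).mp hpW).2
    refine ⟨p, hpW, ?_, ?_⟩
    · have hne : ¬ ((WitS m n φ K j).filter
          fun p' => pairStart m n φ p' < pairStart m n φ p).Nonempty := by
        rintro ⟨q, hq⟩
        obtain ⟨hqW, hqlt⟩ := Finset.mem_filter.mp hq
        have := hmin q hqW
        omega
      unfold loW
      rw [hj, if_neg hne]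
      exact h1
    · have hvp : ∀ q ∈ WitS m n φ K j, v < pairStart m n φ q := by
        intro q hqW
        by_contra hle
        push_neg at hle
        have : q ∈ T := Finset.mem_filter.mpr ⟨hqW, hle⟩
        rw [hTe] at this
        simp at this
      rcases hiW_cases m n φ σ K j p hpW with h | ⟨q, hqW, _, he⟩
      · omega
      · have := hvp q hqW
        omega
  · obtain ⟨p, hpT, hmax⟩ := Finset.exists_max_image T (pairStart m n φ) hTne
    obtain ⟨hpW, hple⟩ := Finset.mem_filter.mp hpT
    refine ⟨p, hpW, ?_, ?_⟩
    · have := loW_le_pair m n φ σ K hK j p hpW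
      omega
    · rcases hiW_cases m n φ σ K j p hpW with h | ⟨q, hqW, hlt, he⟩
      · omega
      · have hqv : v < pairStart m n φ q := by
          by_contra hle
          push_neg at hle
          have hqT : q ∈ T := Finset.mem_filter.mpr ⟨hqW, hle⟩
          have := hmax q hqT
          omega
        omega

/-! ### Fin 3 helper facts -/

lemma nw1_ne (i : Fin m) : nw1 m K i ≠ K i := by
  unfold nw1
  generalize K i = w
  revert w
  decide

lemma nwSlot_le_one (i : Fin m) (kk : Fin 3) : nwSlot m K i kk ≤ 1 := by
  unfold nwSlot
  split_ifs <;> omega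

lemma nwSlot_inj (i : Fin m) (kk kk' : Fin 3) (h1 : kk ≠ K i) (h2 : kk' ≠ K i)
    (h : nwSlot m K i kk = nwSlot m K i kk') : kk = kk' := by
  unfold nwSlot nw1 at h
  revert h h1 h2
  generalize K i = w
  revert kk kk' w
  decide

lemma slot_surj (i : Fin m) (e : ℕ) (he : e ≤ 1) :
    ∃ kk : Fin 3, kk ≠ K i ∧ nwSlot m K i kk = e := by
  rcases Nat.le_one_iff_eq_zero_or_eq_one.mp he with rfl | rfl
  · exact ⟨nw1 m K i, nw1_ne m K i, by unfold nwSlot; rw [if_pos rfl]⟩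
  · have h : ∃ kk : Fin 3, kk ≠ K i ∧ kk ≠ nw1 m K i := by
      unfold nw1
      generalize K i = w
      revert w
      decide
    obtain ⟨kk, h1, h2⟩ := h
    exact ⟨kk, h1, by unfold nwSlot; rw [if_neg h2]⟩

/-! ### interval range facts -/

lemma In_clause_nw (i : Fin m) (kk : Fin 3) (v : ℕ) (h : ¬ kk = K i)
    (hv : lo m n φ σ K (.inl (i, kk)) ≤ v ∧ v < hi m n φ σ K (.inl (i, kk))) :
    4 * i.val + 2 * nwSlot m K i kk ≤ v ∧ v < 4 * i.val + 2 * nwSlot m K i kk + 2 := by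
  simp only [lo, hi, if_neg h] at hv
  exact hv

lemma In_wit_region (hK : ∀ i, σ (φ i (K i)).1 = (φ i (K i)).2)
    (p : Fin m × Fin 3) (v : ℕ) (hw : p.2 = K p.1)
    (hv : lo m n φ σ K (.inl p) ≤ v ∧ v < hi m n φ σ K (.inl p)) :
    rS m n φ σ (φ p.1 p.2).1 ≤ v ∧ v < rE m n φ σ (φ p.1 p.2).1 := by
  have hp : p ∈ WitS m n φ K (φ p.1 p.2).1 := (mem_WitS_iff m n φ K _ p).mpr ⟨hw, rfl⟩
  simp only [lo, hi, if_pos hw] at hv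
  exact ⟨le_trans (rS_le_loW m n φ σ K hK _ p hp) hv.1,
    lt_of_lt_of_le hv.2 (hiW_le_rE m n φ σ K _ p hp)⟩

lemma In_wit_gadget (hK : ∀ i, σ (φ i (K i)).1 = (φ i (K i)).2)
    (p : Fin m × Fin 3) (v : ℕ) (hw : p.2 = K p.1)
    (hv : lo m n φ σ K (.inl p) ≤ v ∧ v < hi m n φ σ K (.inl p)) :
    varStartR m n φ (φ p.1 p.2).1 ≤ v ∧
      v < varStartR m n φ (φ p.1 p.2).1 + glen m n φ (φ p.1 p.2).1 := by
  have h1 := In_wit_region m n φ σ K hK p v hw hv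
  have h2 := rS_bounds m n φ σ (φ p.1 p.2).1
  omega

lemma In_var_gadget (j : Fin n) (b : Bool) (v : ℕ)
    (hv : lo m n φ σ K (.inr (j, b)) ≤ v ∧ v < hi m n φ σ K (.inr (j, b))) :
    varStartR m n φ j ≤ v ∧ v < varStartR m n φ j + glen m n φ j := by
  have hpo := pos_le_occ m n φ j
  unfold glen
  cases b <;> simp only [lo, hi] at hv <;> split_ifs at hv <;> omega

lemma gadget_determines (j j' : Fin n) (v : ℕ)
    (h1 : varStartR m n φ j ≤ v ∧ v < varStartR m n φ j + glen m n φ j)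
    (h2 : varStartR m n φ j' ≤ v ∧ v < varStartR m n φ j' + glen m n φ j') : j = j' := by
  rcases lt_trichotomy j j' with h | h | h
  · have := varStart_mono m n φ j j' h
    omega
  · exact h
  · have := varStart_mono m n φ j' j h
    omega

/-! ### global uniqueness -/

lemma sigma_false_of_not (j : Fin n) (hW : (WitS m n φ K j).Nonempty)
    (h : ¬((WitS m n φ K j).Nonempty ∧ σ j = true)) : σ j = false := by
  cases hσ : σ j
  · rfl
  · exact absurd ⟨hW, hσ⟩ h

lemma rS_rE_true (j : Fin n) (hσ : σ j = true) :
    rS m n φ σ j = varStartR m n φ j + 2 ∧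
    rE m n φ σ j = varStartR m n φ j + 3 + 2 * posOcc m n φ j := by
  unfold rS rE
  rw [hσ]
  simp

lemma rS_rE_false (j : Fin n) (hσ : σ j = false) :
    rS m n φ σ j = varStartR m n φ j + 4 + 2 * posOcc m n φ j ∧
    rE m n φ σ j = varStartR m n φ j + 5 + 2 * occCount m n φ j := by
  unfold rS rE
  rw [hσ]
  simp

lemma no_overlap_inl_inr (hK : ∀ i, σ (φ i (K i)).1 = (φ i (K i)).2)
    (p : Fin m × Fin 3) (j : Fin n) (b : Bool) (v : ℕ)
    (ha : lo m n φ σ K (.inl p) ≤ v ∧ v < hi m n φ σ K (.inl p))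
    (hb : lo m n φ σ K (.inr (j, b)) ≤ v ∧ v < hi m n φ σ K (.inr (j, b))) : False := by
  have hgv := In_var_gadget m n φ σ K j b v hb
  by_cases hwp : p.2 = K p.1
  · have hgp := In_wit_gadget m n φ σ K hK p v hwp ha
    have hj := gadget_determines m n φ _ _ v hgp hgv
    have hreg := In_wit_region m n φ σ K hK p v hwp ha
    rw [hj] at hreg
    have hpW : p ∈ WitS m n φ K j := (mem_WitS_iff m n φ K j p).mpr ⟨hwp, hj⟩
    have hW : (WitS m n φ K j).Nonempty := ⟨p, hpW⟩
    have hpo := pos_le_occ m n φ j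
    cases b
    · simp only [lo, hi] at hb
      split_ifs at hb with h1
      · obtain ⟨e1, e2⟩ := rS_rE_true m n φ σ j h1.2
        omega
      · have hσ := sigma_false_of_not m n φ σ K j hW h1
        obtain ⟨e1, e2⟩ := rS_rE_false m n φ σ j hσ
        omega
    · simp only [lo, hi] at hb
      split_ifs at hb with h1 h2 <;>
      first
      | (obtain ⟨e1, e2⟩ := rS_rE_true m n φ σ j h1.2
         omega)
      | (exact absurd hW h2)
      | (have hσ := sigma_false_of_not m n φ σ K j hW h1
         obtain ⟨e1, e2⟩ := rS_rE_false m n φ σ j hσ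
         omega)
  · have h2 := In_clause_nw m n φ σ K p.1 p.2 v hwp ha
    have h3 := le_varStart m n φ j
    have h4 : p.1.val < m := p.1.isLt
    have h5 := nwSlot_le_one m K p.1 p.2
    have h6 := In_var_gadget m n φ σ K j b v hb
    omega

theorem In_unique (hK : ∀ i, σ (φ i (K i)).1 = (φ i (K i)).2) (v : ℕ) (a b : RAgent m n)
    (ha : lo m n φ σ K a ≤ v ∧ v < hi m n φ σ K a)
    (hb : lo m n φ σ K b ≤ v ∧ v < hi m n φ σ K b) : a = b := by
  rcases a with p | ⟨j, bb⟩ <;> rcases b with q | ⟨j', bb'⟩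
  · -- inl / inl
    by_cases hwp : p.2 = K p.1 <;> by_cases hwq : q.2 = K q.1
    · have hpW : p ∈ WitS m n φ K (φ p.1 p.2).1 := (mem_WitS_iff m n φ K _ p).mpr ⟨hwp, rfl⟩
      have hj : (φ p.1 p.2).1 = (φ q.1 q.2).1 :=
        gadget_determines m n φ _ _ v (In_wit_gadget m n φ σ K hK p v hwp ha)
          (In_wit_gadget m n φ σ K hK q v hwq hb)
      have hqW : q ∈ WitS m n φ K (φ p.1 p.2).1 :=
        (mem_WitS_iff m n φ K _ q).mpr ⟨hwq, hj.symm⟩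
      by_cases hpq : p = q
      · rw [hpq]
      · exfalso
        have hlitp := WitS_lit m n φ σ K hK _ p hpW
        have hlitq := WitS_lit m n φ σ K hK _ q hqW
        simp only [lo, hi, if_pos hwp] at ha
        simp only [lo, hi, if_pos hwq] at hb
        rcases pairStart_gap m n φ p q (hlitp.trans hlitq.symm) hpq with h | h
        · have := wit_disjoint m n φ σ K _ p q hpW hqW (by omega)
          omega
        · have := wit_disjoint m n φ σ K _ q p hqW hpW (by omega)
          omega
    · exfalso
      have h1 := In_wit_region m n φ σ K hK p v hwp ha
      have h1' := rS_bounds m n φ σ (φ p.1 p.2).1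
      have h2 := In_clause_nw m n φ σ K q.1 q.2 v hwq hb
      have h3 := le_varStart m n φ (φ p.1 p.2).1
      have h4 : q.1.val < m := q.1.isLt
      have h5 := nwSlot_le_one m K q.1 q.2
      omega
    · exfalso
      have h1 := In_wit_region m n φ σ K hK q v hwq hb
      have h1' := rS_bounds m n φ σ (φ q.1 q.2).1
      have h2 := In_clause_nw m n φ σ K p.1 p.2 v hwp ha
      have h3 := le_varStart m n φ (φ q.1 q.2).1
      have h4 : p.1.val < m := p.1.isLt
      have h5 := nwSlot_le_one m K p.1 p.2
      omega
    · have h1 := In_clause_nw m n φ σ K p.1 p.2 v hwp ha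
      have h2 := In_clause_nw m n φ σ K q.1 q.2 v hwq hb
      have e1 := nwSlot_le_one m K p.1 p.2
      have e2 := nwSlot_le_one m K q.1 q.2
      have hiv : p.1.val = q.1.val ∧ nwSlot m K p.1 p.2 = nwSlot m K q.1 q.2 := by omega
      have hi1 : p.1 = q.1 := Fin.ext hiv.1
      rw [← hi1] at hwq
      have hs := hiv.2
      rw [← hi1] at hs
      have hk2 : p.2 = q.2 := nwSlot_inj m K p.1 p.2 q.2 hwp hwq hs
      congr 1
      exact Prod.ext_iff.mpr ⟨hi1, hk2⟩
  · exact (no_overlap_inl_inr m n φ σ K hK p j' bb' v ha hb).elim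
  · exact (no_overlap_inl_inr m n φ σ K hK q j bb v hb ha).elim
  · have hj := gadget_determines m n φ _ _ v (In_var_gadget m n φ σ K j bb v ha)
      (In_var_gadget m n φ σ K j' bb' v hb)
    subst hj
    have hpo := pos_le_occ m n φ j
    cases bb <;> cases bb'
    · rfl
    · exfalso
      simp only [lo, hi] at ha hb
      split_ifs at ha hb <;> omega
    · exfalso
      simp only [lo, hi] at ha hb
      split_ifs at ha hb <;> omega
    · rfl

/-! ### covering -/

theorem In_cover (hK : ∀ i, σ (φ i (K i)).1 = (φ i (K i)).2) (hn : 0 < n) (v : ℕ)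
    (hv : v < 10 * m + 5 * n) :
    ∃ a : RAgent m n, lo m n φ σ K a ≤ v ∧ v < hi m n φ σ K a := by
  rcases Nat.lt_or_ge v (4 * m) with h4 | h4
  · have hm' : v / 4 < m := by omega
    obtain ⟨kk, hkk, hslot⟩ := slot_surj m K ⟨v / 4, hm'⟩ ((v % 4) / 2) (by omega)
    refine ⟨.inl (⟨v / 4, hm'⟩, kk), ?_⟩
    simp only [lo, hi, if_neg hkk, hslot]
    omega
  · obtain ⟨j, hj1, hj2⟩ := exists_gadget m n φ hn v h4 hv
    have hpo := pos_le_occ m n φ j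
    have ho := occ_split m n φ j
    unfold glen at hj2
    by_cases hW : (WitS m n φ K j).Nonempty
    · cases hσ : σ j
      · -- σ j = false
        have hcond : ¬((WitS m n φ K j).Nonempty ∧ σ j = true) := by
          rintro ⟨-, h⟩
          rw [hσ] at h
          exact Bool.false_ne_true h
        rcases Nat.lt_or_ge v (varStartR m n φ j + 2) with hc | hc
        · refine ⟨.inr (j, false), ?_⟩
          simp only [lo, hi, if_neg hcond]
          omega
        · rcases Nat.lt_or_ge v (varStartR m n φ j + 4 + 2 * posOcc m n φ j) with hc2 | hc2
          · refine ⟨.inr (j, true), ?_⟩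
            simp only [lo, hi, if_neg hcond, if_pos hW]
            omega
          · obtain ⟨e1, e2⟩ := rS_rE_false m n φ σ j hσ
            obtain ⟨p, hpW, hlo, hhi⟩ := wit_cover m n φ σ K hK j hW v (by omega) (by omega)
            refine ⟨.inl p, ?_⟩
            have hw := ((mem_WitS_iff m n φ K j p).mp hpW).1
            simp only [lo, hi, if_pos hw]
            exact ⟨hlo, hhi⟩
      · -- σ j = true
        have hcond : (WitS m n φ K j).Nonempty ∧ σ j = true := ⟨hW, hσ⟩
        rcases Nat.lt_or_ge v (varStartR m n φ j + 2) with hc | hc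
        · refine ⟨.inr (j, true), ?_⟩
          simp only [lo, hi, if_pos hcond]
          omega
        · rcases Nat.lt_or_ge v (varStartR m n φ j + 3 + 2 * posOcc m n φ j) with hc2 | hc2
          · obtain ⟨e1, e2⟩ := rS_rE_true m n φ σ j hσ
            obtain ⟨p, hpW, hlo, hhi⟩ := wit_cover m n φ σ K hK j hW v (by omega) (by omega)
            refine ⟨.inl p, ?_⟩
            have hw := ((mem_WitS_iff m n φ K j p).mp hpW).1
            simp only [lo, hi, if_pos hw]
            exact ⟨hlo, hhi⟩
          · refine ⟨.inr (j, false), ?_⟩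
            simp only [lo, hi, if_pos hcond]
            omega
    · have hcond : ¬((WitS m n φ K j).Nonempty ∧ σ j = true) := by
        rintro ⟨h, -⟩
        exact hW h
      rcases Nat.lt_or_ge v (varStartR m n φ j + 2) with hc | hc
      · refine ⟨.inr (j, false), ?_⟩
        simp only [lo, hi, if_neg hcond]
        omega
      · refine ⟨.inr (j, true), ?_⟩
        simp only [lo, hi, if_neg hcond, if_neg hW]
        omega

/-! ### the owner function -/

noncomputable def owner (hK : ∀ i, σ (φ i (K i)).1 = (φ i (K i)).2) (hn : 0 < n) :
    Fin (10 * m + 5 * n) → RAgent m n :=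
  fun t => (In_cover m n φ σ K hK hn t.val t.isLt).choose

lemma owner_mem (hK : ∀ i, σ (φ i (K i)).1 = (φ i (K i)).2) (hn : 0 < n)
    (t : Fin (10 * m + 5 * n)) :
    lo m n φ σ K (owner m n φ σ K hK hn t) ≤ t.val ∧
      t.val < hi m n φ σ K (owner m n φ σ K hK hn t) :=
  (In_cover m n φ σ K hK hn t.val t.isLt).choose_spec

lemma owner_eq_iff (hK : ∀ i, σ (φ i (K i)).1 = (φ i (K i)).2) (hn : 0 < n)
    (t : Fin (10 * m + 5 * n)) (a : RAgent m n) :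
    owner m n φ σ K hK hn t = a ↔ lo m n φ σ K a ≤ t.val ∧ t.val < hi m n φ σ K a := by
  constructor
  · rintro rfl
    exact owner_mem m n φ σ K hK hn t
  · intro h
    exact In_unique m n φ σ K hK t.val _ a (owner_mem m n φ σ K hK hn t) h

/-! ### counting formulas -/

lemma card_filter_insert6 {α : Type*} [DecidableEq α] (P : α → Prop) [DecidablePred P]
    (x1 x2 x3 x4 x5 x6 : α)
    (d12 : x1 ≠ x2) (d13 : x1 ≠ x3) (d14 : x1 ≠ x4) (d15 : x1 ≠ x5) (d16 : x1 ≠ x6)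
    (d23 : x2 ≠ x3) (d24 : x2 ≠ x4) (d25 : x2 ≠ x5) (d26 : x2 ≠ x6)
    (d34 : x3 ≠ x4) (d35 : x3 ≠ x5) (d36 : x3 ≠ x6)
    (d45 : x4 ≠ x5) (d46 : x4 ≠ x6) (d56 : x5 ≠ x6) :
    (({x1, x2, x3, x4, x5, x6} : Finset α).filter P).card =
      (if P x1 then 1 else 0) + ((if P x2 then 1 else 0) + ((if P x3 then 1 else 0) +
      ((if P x4 then 1 else 0) + ((if P x5 then 1 else 0) + (if P x6 then 1 else 0))))) := by
  rw [Finset.card_filter]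
  rw [Finset.sum_insert (by simp [d12, d13, d14, d15, d16]),
    Finset.sum_insert (by simp [d23, d24, d25, d26]),
    Finset.sum_insert (by simp [d34, d35, d36]),
    Finset.sum_insert (by simp [d45, d46]),
    Finset.sum_insert (by simp [d56]), Finset.sum_singleton]

lemma card_filter_insert4 {α : Type*} [DecidableEq α] (P : α → Prop) [DecidablePred P]
    (x1 x2 x3 x4 : α)
    (d12 : x1 ≠ x2) (d13 : x1 ≠ x3) (d14 : x1 ≠ x4)
    (d23 : x2 ≠ x3) (d24 : x2 ≠ x4) (d34 : x3 ≠ x4) :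
    (({x1, x2, x3, x4} : Finset α).filter P).card =
      (if P x1 then 1 else 0) + ((if P x2 then 1 else 0) + ((if P x3 then 1 else 0) +
      (if P x4 then 1 else 0))) := by
  rw [Finset.card_filter]
  rw [Finset.sum_insert (by simp [d12, d13, d14]),
    Finset.sum_insert (by simp [d23, d24]),
    Finset.sum_insert (by simp [d34]), Finset.sum_singleton]

open Classical in
lemma clause_count_formula (hK : ∀ i, σ (φ i (K i)).1 = (φ i (K i)).2) (hn : 0 < n)
    (q : Fin m × Fin 3) (A : RAgent m n) :
    ((RV m n φ (.inl q)).filter fun t => owner m n φ σ K hK hn t = A).card =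
    (if lo m n φ σ K A ≤ 4 * q.1.val ∧ 4 * q.1.val < hi m n φ σ K A then 1 else 0) +
    ((if lo m n φ σ K A ≤ 4 * q.1.val + 1 ∧ 4 * q.1.val + 1 < hi m n φ σ K A then 1 else 0) +
    ((if lo m n φ σ K A ≤ 4 * q.1.val + 2 ∧ 4 * q.1.val + 2 < hi m n φ σ K A then 1 else 0) +
    ((if lo m n φ σ K A ≤ 4 * q.1.val + 3 ∧ 4 * q.1.val + 3 < hi m n φ σ K A then 1 else 0) +
    ((if lo m n φ σ K A ≤ pairStart m n φ q ∧ pairStart m n φ q < hi m n φ σ K A then 1 else 0) +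
    (if lo m n φ σ K A ≤ pairStart m n φ q + 1 ∧ pairStart m n φ q + 1 < hi m n φ σ K A
      then 1 else 0))))) := by
  have hin := pairStart_in_gadget m n φ q
  have hle := varStart_add_le m n φ (φ q.1 q.2).1
  have h4m := le_varStart m n φ (φ q.1 q.2).1
  have hi1 : q.1.val < m := q.1.isLt
  have hc0 : 4 * q.1.val < 10 * m + 5 * n := by omega
  have hc1 : 4 * q.1.val + 1 < 10 * m + 5 * n := by omega
  have hc2 : 4 * q.1.val + 2 < 10 * m + 5 * n := by omega
  have hc3 : 4 * q.1.val + 3 < 10 * m + 5 * n := by omega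
  have hs0 : pairStart m n φ q < 10 * m + 5 * n := by omega
  have hs1 : pairStart m n φ q + 1 < 10 * m + 5 * n := by omega
  have hset : RV m n φ (.inl q) =
      ({⟨4 * q.1.val, hc0⟩, ⟨4 * q.1.val + 1, hc1⟩, ⟨4 * q.1.val + 2, hc2⟩,
        ⟨4 * q.1.val + 3, hc3⟩, ⟨pairStart m n φ q, hs0⟩, ⟨pairStart m n φ q + 1, hs1⟩} :
        Finset (Fin (10 * m + 5 * n))) := by
    ext t
    simp only [RV, Finset.mem_filter, Finset.mem_univ, true_and, Finset.mem_insert,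
      Finset.mem_singleton, Fin.ext_iff]
    all_goals omega
  rw [hset, card_filter_insert6 _ _ _ _ _ _ _
    (by simp only [ne_eq, Fin.mk.injEq]; omega) (by simp only [ne_eq, Fin.mk.injEq]; omega) (by simp only [ne_eq, Fin.mk.injEq]; omega)
    (by simp only [ne_eq, Fin.mk.injEq]; omega) (by simp only [ne_eq, Fin.mk.injEq]; omega)
    (by simp only [ne_eq, Fin.mk.injEq]; omega) (by simp only [ne_eq, Fin.mk.injEq]; omega)
    (by simp only [ne_eq, Fin.mk.injEq]; omega) (by simp only [ne_eq, Fin.mk.injEq]; omega)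
    (by simp only [ne_eq, Fin.mk.injEq]; omega) (by simp only [ne_eq, Fin.mk.injEq]; omega) (by simp only [ne_eq, Fin.mk.injEq]; omega)
    (by simp only [ne_eq, Fin.mk.injEq]; omega) (by simp only [ne_eq, Fin.mk.injEq]; omega) (by simp only [ne_eq, Fin.mk.injEq]; omega)]
  simp only [owner_eq_iff m n φ σ K hK hn]

open Classical in
lemma varT_count_formula (hK : ∀ i, σ (φ i (K i)).1 = (φ i (K i)).2) (hn : 0 < n)
    (j : Fin n) (A : RAgent m n) :
    ((RV m n φ (.inr (j, true))).filter fun t => owner m n φ σ K hK hn t = A).card =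
    (if lo m n φ σ K A ≤ varStartR m n φ j ∧ varStartR m n φ j < hi m n φ σ K A
      then 1 else 0) +
    ((if lo m n φ σ K A ≤ varStartR m n φ j + 1 ∧ varStartR m n φ j + 1 < hi m n φ σ K A
      then 1 else 0) +
    ((if lo m n φ σ K A ≤ varStartR m n φ j + 2 ∧ varStartR m n φ j + 2 < hi m n φ σ K A
      then 1 else 0) +
    (if lo m n φ σ K A ≤ varStartR m n φ j + 3 + 2 * posOcc m n φ j ∧
        varStartR m n φ j + 3 + 2 * posOcc m n φ j < hi m n φ σ K A then 1 else 0))) := by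
  have hle := varStart_add_le m n φ j
  have hpo := pos_le_occ m n φ j
  have hglen : glen m n φ j = 5 + 2 * occCount m n φ j := rfl
  have hv0 : varStartR m n φ j < 10 * m + 5 * n := by omega
  have hv1 : varStartR m n φ j + 1 < 10 * m + 5 * n := by omega
  have hv2 : varStartR m n φ j + 2 < 10 * m + 5 * n := by omega
  have hv3 : varStartR m n φ j + 3 + 2 * posOcc m n φ j < 10 * m + 5 * n := by omega
  have hset : RV m n φ (.inr (j, true)) =
      ({⟨varStartR m n φ j, hv0⟩, ⟨varStartR m n φ j + 1, hv1⟩, ⟨varStartR m n φ j + 2, hv2⟩,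
        ⟨varStartR m n φ j + 3 + 2 * posOcc m n φ j, hv3⟩} :
        Finset (Fin (10 * m + 5 * n))) := by
    ext t
    simp only [RV, Finset.mem_filter, Finset.mem_univ, true_and, Finset.mem_insert,
      Finset.mem_singleton, Fin.ext_iff]
    all_goals omega
  rw [hset, card_filter_insert4 _ _ _ _ _
    (by simp only [ne_eq, Fin.mk.injEq]; omega) (by simp only [ne_eq, Fin.mk.injEq]; omega) (by simp only [ne_eq, Fin.mk.injEq]; omega)
    (by simp only [ne_eq, Fin.mk.injEq]; omega) (by simp only [ne_eq, Fin.mk.injEq]; omega) (by simp only [ne_eq, Fin.mk.injEq]; omega)]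
  simp only [owner_eq_iff m n φ σ K hK hn]

open Classical in
lemma varF_count_formula (hK : ∀ i, σ (φ i (K i)).1 = (φ i (K i)).2) (hn : 0 < n)
    (j : Fin n) (A : RAgent m n) :
    ((RV m n φ (.inr (j, false))).filter fun t => owner m n φ σ K hK hn t = A).card =
    (if lo m n φ σ K A ≤ varStartR m n φ j ∧ varStartR m n φ j < hi m n φ σ K A
      then 1 else 0) +
    ((if lo m n φ σ K A ≤ varStartR m n φ j + 1 ∧ varStartR m n φ j + 1 < hi m n φ σ K A
      then 1 else 0) +
    ((if lo m n φ σ K A ≤ varStartR m n φ j + 3 + 2 * posOcc m n φ j ∧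
        varStartR m n φ j + 3 + 2 * posOcc m n φ j < hi m n φ σ K A then 1 else 0) +
    (if lo m n φ σ K A ≤ varStartR m n φ j + 4 + 2 * occCount m n φ j ∧
        varStartR m n φ j + 4 + 2 * occCount m n φ j < hi m n φ σ K A then 1 else 0))) := by
  have hle := varStart_add_le m n φ j
  have hpo := pos_le_occ m n φ j
  have hglen : glen m n φ j = 5 + 2 * occCount m n φ j := rfl
  have hv0 : varStartR m n φ j < 10 * m + 5 * n := by omega
  have hv1 : varStartR m n φ j + 1 < 10 * m + 5 * n := by omega
  have hv3 : varStartR m n φ j + 3 + 2 * posOcc m n φ j < 10 * m + 5 * n := by omega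
  have hv4 : varStartR m n φ j + 4 + 2 * occCount m n φ j < 10 * m + 5 * n := by omega
  have hset : RV m n φ (.inr (j, false)) =
      ({⟨varStartR m n φ j, hv0⟩, ⟨varStartR m n φ j + 1, hv1⟩,
        ⟨varStartR m n φ j + 3 + 2 * posOcc m n φ j, hv3⟩,
        ⟨varStartR m n φ j + 4 + 2 * occCount m n φ j, hv4⟩} :
        Finset (Fin (10 * m + 5 * n))) := by
    ext t
    simp only [RV, Finset.mem_filter, Finset.mem_univ, true_and, Finset.mem_insert,
      Finset.mem_singleton, Fin.ext_iff]
    all_goals omega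
  rw [hset, card_filter_insert4 _ _ _ _ _
    (by simp only [ne_eq, Fin.mk.injEq]; omega) (by simp only [ne_eq, Fin.mk.injEq]; omega) (by simp only [ne_eq, Fin.mk.injEq]; omega)
    (by simp only [ne_eq, Fin.mk.injEq]; omega) (by simp only [ne_eq, Fin.mk.injEq]; omega) (by simp only [ne_eq, Fin.mk.injEq]; omega)]
  simp only [owner_eq_iff m n φ σ K hK hn]

/-! ### range helpers -/

lemma var_range (j : Fin n) (b : Bool) :
    varStartR m n φ j ≤ lo m n φ σ K (.inr (j, b)) ∧
    hi m n φ σ K (.inr (j, b)) ≤ varStartR m n φ j + glen m n φ j := by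
  have hpo := pos_le_occ m n φ j
  unfold glen
  cases b <;> simp only [lo, hi] <;> split_ifs <;> omega

lemma lo_hi_wit (p : Fin m × Fin 3) (hw : p.2 = K p.1) :
    lo m n φ σ K (.inl p) = loW m n φ σ K p ∧
    hi m n φ σ K (.inl p) = hiW m n φ σ K p := by
  constructor <;> simp only [lo, hi, if_pos hw]

lemma wit_range (hK : ∀ i, σ (φ i (K i)).1 = (φ i (K i)).2)
    (p : Fin m × Fin 3) (hw : p.2 = K p.1) :
    rS m n φ σ (φ p.1 p.2).1 ≤ lo m n φ σ K (.inl p) ∧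
    hi m n φ σ K (.inl p) ≤ rE m n φ σ (φ p.1 p.2).1 ∧
    varStartR m n φ (φ p.1 p.2).1 + 2 ≤ lo m n φ σ K (.inl p) ∧
    hi m n φ σ K (.inl p) ≤ varStartR m n φ (φ p.1 p.2).1 + glen m n φ (φ p.1 p.2).1 := by
  have hp : p ∈ WitS m n φ K (φ p.1 p.2).1 := (mem_WitS_iff m n φ K _ p).mpr ⟨hw, rfl⟩
  have h1 := rS_le_loW m n φ σ K hK _ p hp
  have h2 := hiW_le_rE m n φ σ K _ p hp
  have h3 := rS_bounds m n φ σ (φ p.1 p.2).1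
  obtain ⟨e1, e2⟩ := lo_hi_wit m n φ σ K p hw
  rw [e1, e2]
  omega

/-! ### counting theorems -/

open Classical in
theorem count_clause_le (hK : ∀ i, σ (φ i (K i)).1 = (φ i (K i)).2) (hn : 0 < n)
    (q : Fin m × Fin 3) (A : RAgent m n) :
    ((RV m n φ (.inl q)).filter fun t => owner m n φ σ K hK hn t = A).card ≤ 2 := by
  rw [clause_count_formula m n φ σ K hK hn q A]
  have hin := pairStart_in_gadget m n φ q
  have h4mq := le_varStart m n φ (φ q.1 q.2).1
  have hi1 : q.1.val < m := q.1.isLt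
  rcases A with p | ⟨j, b⟩
  · by_cases hw : p.2 = K p.1
    · have hr := wit_range m n φ σ K hK p hw
      have h4mp := le_varStart m n φ (φ p.1 p.2).1
      split_ifs <;> omega
    · simp only [lo, hi, if_neg hw]
      have he := nwSlot_le_one m K p.1 p.2
      have hip : p.1.val < m := p.1.isLt
      split_ifs <;> omega
  · have hr := var_range m n φ σ K j b
    have h4mj := le_varStart m n φ j
    split_ifs <;> omega

open Classical in
theorem count_own (hK : ∀ i, σ (φ i (K i)).1 = (φ i (K i)).2) (hn : 0 < n)
    (A : RAgent m n) :
    ((RV m n φ A).filter fun t => owner m n φ σ K hK hn t = A).card = 2 := by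
  rcases A with q | ⟨j, b⟩
  · rw [clause_count_formula m n φ σ K hK hn q (.inl q)]
    have hin := pairStart_in_gadget m n φ q
    have h4mq := le_varStart m n φ (φ q.1 q.2).1
    have hi1 : q.1.val < m := q.1.isLt
    by_cases hw : q.2 = K q.1
    · have hp : q ∈ WitS m n φ K (φ q.1 q.2).1 := (mem_WitS_iff m n φ K _ q).mpr ⟨hw, rfl⟩
      have h1 := loW_le_pair m n φ σ K hK _ q hp
      have h2 := pair_add_two_le_hiW m n φ σ K hK _ q hp
      have hr := wit_range m n φ σ K hK q hw
      obtain ⟨e1, e2⟩ := lo_hi_wit m n φ σ K q hw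
      rw [← e1] at h1
      rw [← e2] at h2
      split_ifs <;> omega
    · simp only [lo, hi, if_neg hw]
      have he := nwSlot_le_one m K q.1 q.2
      split_ifs <;> omega
  · have hle := varStart_add_le m n φ j
    have hpo := pos_le_occ m n φ j
    have ho := occ_split m n φ j
    have hglen : glen m n φ j = 5 + 2 * occCount m n φ j := rfl
    cases b
    · rw [varF_count_formula m n φ σ K hK hn j (.inr (j, false))]
      by_cases hW : (WitS m n φ K j).Nonempty
      · cases hσ : σ j
        · have hcond : ¬((WitS m n φ K j).Nonempty ∧ σ j = true) := by
            rintro ⟨-, h⟩; rw [hσ] at h; exact Bool.false_ne_true h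
          simp only [lo, hi, if_neg hcond]
          split_ifs <;> omega
        · have hcond : (WitS m n φ K j).Nonempty ∧ σ j = true := ⟨hW, hσ⟩
          simp only [lo, hi, if_pos hcond]
          split_ifs <;> omega
      · have hcond : ¬((WitS m n φ K j).Nonempty ∧ σ j = true) := by
          rintro ⟨h, -⟩; exact hW h
        simp only [lo, hi, if_neg hcond]
        split_ifs <;> omega
    · rw [varT_count_formula m n φ σ K hK hn j (.inr (j, true))]
      by_cases hW : (WitS m n φ K j).Nonempty
      · cases hσ : σ j
        · have hcond : ¬((WitS m n φ K j).Nonempty ∧ σ j = true) := by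
            rintro ⟨-, h⟩; rw [hσ] at h; exact Bool.false_ne_true h
          simp only [lo, hi, if_neg hcond, if_pos hW]
          split_ifs <;> omega
        · have hcond : (WitS m n φ K j).Nonempty ∧ σ j = true := ⟨hW, hσ⟩
          simp only [lo, hi, if_pos hcond]
          split_ifs <;> omega
      · have hcond : ¬((WitS m n φ K j).Nonempty ∧ σ j = true) := by
          rintro ⟨h, -⟩; exact hW h
        simp only [lo, hi, if_neg hcond, if_neg hW]
        split_ifs <;> omega

open Classical in
theorem count_varT_le (hK : ∀ i, σ (φ i (K i)).1 = (φ i (K i)).2) (hn : 0 < n)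
    (j : Fin n) (A : RAgent m n) (hne : A ≠ .inr (j, true)) :
    ((RV m n φ (.inr (j, true))).filter fun t => owner m n φ σ K hK hn t = A).card ≤ 2 := by
  rw [varT_count_formula m n φ σ K hK hn j A]
  have hle := varStart_add_le m n φ j
  have hpo := pos_le_occ m n φ j
  have ho := occ_split m n φ j
  have hglen : glen m n φ j = 5 + 2 * occCount m n φ j := rfl
  have h4mj := le_varStart m n φ j
  rcases A with p | ⟨j', b'⟩
  · by_cases hw : p.2 = K p.1
    · have hr := wit_range m n φ σ K hK p hw
      rcases lt_trichotomy (φ p.1 p.2).1 j with h | h | h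
      · have := varStart_mono m n φ (φ p.1 p.2).1 j h
        split_ifs <;> omega
      · rw [h] at hr
        cases hσ : σ j
        · obtain ⟨e1, e2⟩ := rS_rE_false m n φ σ j hσ
          rw [e1, e2] at hr
          split_ifs <;> omega
        · obtain ⟨e1, e2⟩ := rS_rE_true m n φ σ j hσ
          rw [e1, e2] at hr
          split_ifs <;> omega
      · have := varStart_mono m n φ j (φ p.1 p.2).1 h
        split_ifs <;> omega
    · simp only [lo, hi, if_neg hw]
      have he := nwSlot_le_one m K p.1 p.2
      have hip : p.1.val < m := p.1.isLt
      split_ifs <;> omega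
  · have hr := var_range m n φ σ K j' b'
    have hglen' : glen m n φ j' = 5 + 2 * occCount m n φ j' := rfl
    have hpo' := pos_le_occ m n φ j'
    rcases lt_trichotomy j' j with h | h | h
    · have := varStart_mono m n φ j' j h
      split_ifs <;> omega
    · subst h
      cases b'
      · by_cases hW : (WitS m n φ K j').Nonempty
        · cases hσ : σ j'
          · have hcond : ¬((WitS m n φ K j').Nonempty ∧ σ j' = true) := by
              rintro ⟨-, hh⟩; rw [hσ] at hh; exact Bool.false_ne_true hh
            simp only [lo, hi, if_neg hcond]
            split_ifs <;> omega
          · have hcond : (WitS m n φ K j').Nonempty ∧ σ j' = true := ⟨hW, hσ⟩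
            simp only [lo, hi, if_pos hcond]
            split_ifs <;> omega
        · have hcond : ¬((WitS m n φ K j').Nonempty ∧ σ j' = true) := by
            rintro ⟨hh, -⟩; exact hW hh
          simp only [lo, hi, if_neg hcond]
          split_ifs <;> omega
      · exact absurd rfl hne
    · have := varStart_mono m n φ j j' h
      split_ifs <;> omega

open Classical in
theorem count_varF_le (hK : ∀ i, σ (φ i (K i)).1 = (φ i (K i)).2) (hn : 0 < n)
    (j : Fin n) (A : RAgent m n) (hne : A ≠ .inr (j, false)) :
    ((RV m n φ (.inr (j, false))).filter fun t => owner m n φ σ K hK hn t = A).card ≤ 2 := by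
  rw [varF_count_formula m n φ σ K hK hn j A]
  have hle := varStart_add_le m n φ j
  have hpo := pos_le_occ m n φ j
  have ho := occ_split m n φ j
  have hglen : glen m n φ j = 5 + 2 * occCount m n φ j := rfl
  have h4mj := le_varStart m n φ j
  rcases A with p | ⟨j', b'⟩
  · by_cases hw : p.2 = K p.1
    · have hr := wit_range m n φ σ K hK p hw
      rcases lt_trichotomy (φ p.1 p.2).1 j with h | h | h
      · have := varStart_mono m n φ (φ p.1 p.2).1 j h
        split_ifs <;> omega
      · rw [h] at hr
        cases hσ : σ j
        · obtain ⟨e1, e2⟩ := rS_rE_false m n φ σ j hσ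
          rw [e1, e2] at hr
          split_ifs <;> omega
        · obtain ⟨e1, e2⟩ := rS_rE_true m n φ σ j hσ
          rw [e1, e2] at hr
          split_ifs <;> omega
      · have := varStart_mono m n φ j (φ p.1 p.2).1 h
        split_ifs <;> omega
    · simp only [lo, hi, if_neg hw]
      have he := nwSlot_le_one m K p.1 p.2
      have hip : p.1.val < m := p.1.isLt
      split_ifs <;> omega
  · have hr := var_range m n φ σ K j' b'
    have hglen' : glen m n φ j' = 5 + 2 * occCount m n φ j' := rfl
    have hpo' := pos_le_occ m n φ j'
    rcases lt_trichotomy j' j with h | h | h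
    · have := varStart_mono m n φ j' j h
      split_ifs <;> omega
    · subst h
      cases b'
      · exact absurd rfl hne
      · by_cases hW : (WitS m n φ K j').Nonempty
        · cases hσ : σ j'
          · have hcond : ¬((WitS m n φ K j').Nonempty ∧ σ j' = true) := by
              rintro ⟨-, hh⟩; rw [hσ] at hh; exact Bool.false_ne_true hh
            simp only [lo, hi, if_neg hcond, if_pos hW]
            split_ifs <;> omega
          · have hcond : (WitS m n φ K j').Nonempty ∧ σ j' = true := ⟨hW, hσ⟩
            simp only [lo, hi, if_pos hcond]
            split_ifs <;> omega
        · have hcond : ¬((WitS m n φ K j').Nonempty ∧ σ j' = true) := by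
            rintro ⟨hh, -⟩; exact hW hh
          simp only [lo, hi, if_neg hcond, if_neg hW]
          split_ifs <;> omega
    · have := varStart_mono m n φ j j' h
      split_ifs <;> omega

end Stmt14

open Classical in
/-- If `φ` is satisfiable, then the discrete instance `R` built from `φ`
admits a contiguous allocation in which every agent receives exactly two items she values
and, for every pair of distinct agents `a ≠ b`, the set allocated to `a` contains at most
two items valued by `b`; in particular this allocation is envy-free. -/
theorem exists_nice_allocation_of_satisfiable
    (m n : ℕ) (hm : 0 < m) (hn : 0 < n)
    (φ : Fin m → Fin 3 → Fin n × Bool)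
    (hsat : SatFormula m n φ) :
    ∃ owner : Fin (10 * m + 5 * n) → RAgent m n,
      ContigAlloc owner ∧
      (∀ a : RAgent m n, ((RV m n φ a).filter fun t => owner t = a).card = 2) ∧
      (∀ a b : RAgent m n, a ≠ b →
        ((RV m n φ b).filter fun t => owner t = a).card ≤ 2) ∧
      (∀ a b : RAgent m n,
        discVal (RV m n φ) owner a a ≥ discVal (RV m n φ) owner a b) := by
  obtain ⟨σ, hσ⟩ := hsat
  choose K hK using hσ
  have hcount2 : ∀ a : RAgent m n,
      ((RV m n φ a).filter fun t => Stmt14.owner m n φ σ K hK hn t = a).card = 2 :=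
    Stmt14.count_own m n φ σ K hK hn
  have hcountle : ∀ a b : RAgent m n, a ≠ b →
      ((RV m n φ b).filter fun t => Stmt14.owner m n φ σ K hK hn t = a).card ≤ 2 := by
    intro a b hne
    rcases b with q | ⟨j, bb⟩
    · exact Stmt14.count_clause_le m n φ σ K hK hn q a
    · cases bb
      · exact Stmt14.count_varF_le m n φ σ K hK hn j a hne
      · exact Stmt14.count_varT_le m n φ σ K hK hn j a hne
  refine ⟨Stmt14.owner m n φ σ K hK hn, ?_, hcount2, hcountle, ?_⟩
  · intro A t1 t2 t3 h12 h23 h1 h3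
    rw [Stmt14.owner_eq_iff] at h1 h3 ⊢
    rw [Fin.le_def] at h12 h23
    omega
  · intro A B
    by_cases hAB : A = B
    · subst hAB
      exact le_refl _
    · have h1 : ((RV m n φ A).filter fun t => Stmt14.owner m n φ σ K hK hn t = B).card ≤ 2 :=
        hcountle B A (Ne.symm hAB)
      have h2 := hcount2 A
      have h3 : 2 ≤ (RV m n φ A).card :=
        h2 ▸ Finset.card_le_card (Finset.filter_subset _ _)
      have hXY : ((RV m n φ A).filter fun t => Stmt14.owner m n φ σ K hK hn t = B).card ≤
          ((RV m n φ A).filter fun t => Stmt14.owner m n φ σ K hK hn t = A).card := by omega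
      have hcpos : (0:ℝ) < ((RV m n φ A).card : ℝ) := by
        have : 0 < (RV m n φ A).card := by omega
        exact_mod_cast this
      unfold discVal
      rw [ge_iff_le, div_le_div_iff_of_pos_right hcpos, Nat.cast_le]
      convert hXY using 2 <;> congr 1 <;> exact Subsingleton.elim _ _
end

section
/- Let there be m items on a line and n agents with disjoint binary valuations: agent i values a nonempty set V_i of m_i items, and every item is valued by at most one agent. For j = 1,…,m let I_j = [(j−1)/m, j/m], and let w_i be the valuation on the cake [0,1] whose density equals m/m_i on the union of the intervals I_j over j ∈ V_i and 0 elsewhere (so w_i([0,1]) = 1). Let ε = min_i 1/(n·m_i). If the cake-cutting instance (w_1,…,w_n) admits a contiguous ε-envy-free allocation with permutation π, then it admits a contiguous exactly envy-free allocation with the same permutation π in which every cut point is an integer multiple of 1/m; consequently, the discrete instance (V_1,…,V_n) admits a contiguous envy-free allocation. -/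
open Finset

/-- Key ceiling identity. -/
lemma ceil_sub_ceil (a b s : ℝ) :
    ⌈b - s⌉ - ⌈a - s⌉ = ⌊b - a⌋ + (if Int.fract (s - a) < Int.fract (b - a) then 1 else 0) := by
  have h1 : b - s = (Int.fract (b-a) - Int.fract (s-a)) + ((⌊b-a⌋ - ⌊s-a⌋ : ℤ) : ℝ) := by
    simp only [Int.fract]; push_cast; ring
  have h2 : a - s = (0 - Int.fract (s-a)) + ((- ⌊s-a⌋ : ℤ) : ℝ) := by
    simp only [Int.fract]; push_cast; ring
  have hA0 : 0 ≤ Int.fract (s-a) := Int.fract_nonneg _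
  have hA1 : Int.fract (s-a) < 1 := Int.fract_lt_one _
  have hf0 : 0 ≤ Int.fract (b-a) := Int.fract_nonneg _
  have hf1 : Int.fract (b-a) < 1 := Int.fract_lt_one _
  rw [h1, h2, Int.ceil_add_intCast, Int.ceil_add_intCast]
  have h3 : ⌈(0:ℝ) - Int.fract (s-a)⌉ = 0 := by
    rw [Int.ceil_eq_iff]
    push_cast
    constructor
    · linarith
    · linarith
  by_cases h : Int.fract (s-a) < Int.fract (b-a)
  · have h4 : ⌈Int.fract (b-a) - Int.fract (s-a)⌉ = 1 := by
      rw [Int.ceil_eq_iff]; push_cast; constructor <;> linarith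
    rw [if_pos h, h3, h4]; ring
  · have h4 : ⌈Int.fract (b-a) - Int.fract (s-a)⌉ = 0 := by
      rw [Int.ceil_eq_iff]; push_cast
      constructor
      · linarith
      · linarith [not_lt.mp h]
    rw [if_neg h, h3, h4]; ring

lemma card_grid (N : ℕ) (α β : ℝ) (hab : α ≤ β) :
    ((((Finset.range N).filter fun t : ℕ => α ≤ (t:ℝ) ∧ (t:ℝ) < β).card : ℝ)) ≤ β - α + 1 := by
  have key : (((Finset.range N).filter fun t : ℕ => α ≤ (t:ℝ) ∧ (t:ℝ) < β).card)
      ≤ (Finset.Ico ⌈α⌉ ⌈β⌉).card := by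
    refine Finset.card_le_card_of_injOn (fun t : ℕ => (t : ℤ)) ?_ ?_
    · intro t ht
      simp only [Finset.mem_coe, Finset.mem_filter, Finset.mem_range] at ht
      simp only [Finset.mem_coe, Finset.mem_Ico]
      exact ⟨Int.ceil_le.mpr (by exact_mod_cast ht.2.1), Int.lt_ceil.mpr (by exact_mod_cast ht.2.2)⟩
    · intro x _ y _ hxy
      have : ((x:ℤ)) = (y:ℤ) := by simpa using hxy
      exact_mod_cast this
  have h2 : (((Finset.range N).filter fun t : ℕ => α ≤ (t:ℝ) ∧ (t:ℝ) < β).card : ℝ)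
      ≤ ((Finset.Ico ⌈α⌉ ⌈β⌉).card : ℝ) := by exact_mod_cast key
  refine h2.trans ?_
  rw [Int.card_Ico]
  rcases le_or_gt (⌈β⌉ - ⌈α⌉) 0 with h | h
  · simp only [Int.toNat_of_nonpos h]
    push_cast
    linarith
  · have h4 : (((⌈β⌉ - ⌈α⌉).toNat : ℕ) : ℝ) = ((⌈β⌉ : ℝ) - ⌈α⌉) := by
      have h5 : (((⌈β⌉ - ⌈α⌉).toNat : ℤ) : ℝ) = ((⌈β⌉ : ℝ) - ⌈α⌉) := by
        rw [Int.toNat_of_nonneg h.le]; push_cast; ring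
      rw [← h5]; norm_cast
    rw [h4]
    have := Int.ceil_lt_add_one β
    have := Int.le_ceil α
    linarith

lemma arc_count (N : ℕ) (d f : ℝ) (hf0 : 0 ≤ f) :
    ((((Finset.range N).filter fun t : ℕ => Int.fract ((t:ℝ)/N + d) < f).card : ℝ)) ≤ N * f + 2 := by
  set e := Int.fract d with he
  have he0 : 0 ≤ e := Int.fract_nonneg _
  have he1 : e < 1 := Int.fract_lt_one _
  have hfr : ∀ t : ℕ, Int.fract ((t:ℝ)/N + d) = Int.fract ((t:ℝ)/N + e) := by
    intro t
    have hdec : (t:ℝ)/N + d = ((t:ℝ)/N + e) + (⌊d⌋ : ℤ) := by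
      simp only [he, Int.fract]; ring
    rw [hdec, Int.fract_add_intCast]
  have hNn : (0:ℝ) ≤ N := by positivity
  have hsub : ((Finset.range N).filter fun t : ℕ => Int.fract ((t:ℝ)/N + d) < f) ⊆
      (((Finset.range N).filter fun t : ℕ => (0:ℝ) ≤ (t:ℝ) ∧ (t:ℝ) < N * (f - e)) ∪
       ((Finset.range N).filter fun t : ℕ => N*(1-e) ≤ (t:ℝ) ∧ (t:ℝ) < N*(1-e) + N * (min e f))) := by
    intro t ht
    simp only [Finset.mem_filter, Finset.mem_range] at ht
    obtain ⟨htN, htf⟩ := ht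
    rw [hfr] at htf
    have htN' : (t:ℝ) < N := by exact_mod_cast htN
    have hNpos : (0:ℝ) < N := lt_of_le_of_lt (by positivity) htN'
    have hx0 : 0 ≤ (t:ℝ)/N + e := by positivity
    simp only [Finset.mem_union, Finset.mem_filter, Finset.mem_range]
    rcases lt_or_ge ((t:ℝ)/N + e) 1 with hx1 | hx1
    · left
      rw [Int.fract_eq_self.mpr ⟨hx0, hx1⟩] at htf
      refine ⟨htN, by positivity, ?_⟩
      have h5 : (t:ℝ)/N < f - e := by linarith
      calc (t:ℝ) = ((t:ℝ)/N) * N := by field_simp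
      _ < (f - e) * N := mul_lt_mul_of_pos_right h5 hNpos
      _ = N * (f - e) := by ring
    · right
      have hdivlt : (t:ℝ)/N < 1 := by rw [div_lt_one hNpos]; exact htN'
      have hfr2 : Int.fract ((t:ℝ)/N + e) = (t:ℝ)/N + e - 1 := by
        have hdec : (t:ℝ)/N + e = ((t:ℝ)/N + e - 1) + ((1:ℤ) : ℝ) := by push_cast; ring
        rw [hdec, Int.fract_add_intCast, Int.fract_eq_self.mpr ⟨by linarith, by linarith⟩]
        push_cast; ring
      rw [hfr2] at htf
      refine ⟨htN, ?_, ?_⟩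
      · have h6 : 1 - e ≤ (t:ℝ)/N := by linarith
        calc N * (1-e) = (1-e) * N := by ring
        _ ≤ ((t:ℝ)/N) * N := mul_le_mul_of_nonneg_right h6 hNn
        _ = (t:ℝ) := by field_simp
      · have h7 : (t:ℝ)/N < 1 - e + min e f := by
          rcases min_cases e f with ⟨hm, _⟩ | ⟨hm, _⟩ <;> rw [hm] <;> linarith
        calc (t:ℝ) = ((t:ℝ)/N) * N := by field_simp
        _ < (1 - e + min e f) * N := mul_lt_mul_of_pos_right h7 hNpos
        _ = N*(1-e) + N * (min e f) := by ring
  have hmin0 : 0 ≤ min e f := le_min he0 hf0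
  have hcard : (((Finset.range N).filter fun t : ℕ => Int.fract ((t:ℝ)/N + d) < f).card : ℝ)
      ≤ ((((Finset.range N).filter fun t : ℕ => (0:ℝ) ≤ (t:ℝ) ∧ (t:ℝ) < N * (f - e)).card : ℝ)) +
        ((((Finset.range N).filter fun t : ℕ => N*(1-e) ≤ (t:ℝ) ∧ (t:ℝ) < N*(1-e) + N * (min e f)).card : ℝ)) := by
    have h := (Finset.card_le_card hsub).trans (Finset.card_union_le _ _)
    exact_mod_cast h
  have hc2 : ((((Finset.range N).filter fun t : ℕ => N*(1-e) ≤ (t:ℝ) ∧ (t:ℝ) < N*(1-e) + N * (min e f)).card : ℝ))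
      ≤ N * (min e f) + 1 := by
    have h := card_grid N (N*(1-e)) (N*(1-e) + N * (min e f)) (by nlinarith)
    linarith
  rcases le_or_gt e f with hef | hef
  · have hc1 : ((((Finset.range N).filter fun t : ℕ => (0:ℝ) ≤ (t:ℝ) ∧ (t:ℝ) < N * (f - e)).card : ℝ))
        ≤ N * (f - e) + 1 := by
      have h := card_grid N 0 (N * (f - e)) (by nlinarith)
      linarith
    have hm : min e f = e := min_eq_left hef
    rw [hm] at hcard hc2
    nlinarith
  · have hc1 : ((Finset.range N).filter fun t : ℕ => (0:ℝ) ≤ (t:ℝ) ∧ (t:ℝ) < N * (f - e)) = ∅ := by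
      apply Finset.filter_false_of_mem
      intro t _
      rintro ⟨-, h2⟩
      have h8 : (N:ℝ) * (f - e) ≤ 0 := by nlinarith
      have h9 : (0:ℝ) ≤ (t:ℝ) := by positivity
      linarith
    have hm : min e f = f := min_eq_right hef.le
    rw [hm] at hcard hc2
    rw [hc1] at hcard
    simp only [Finset.card_empty, Nat.cast_zero, zero_add] at hcard
    linarith

open Finset

/-- Existence of a point in the target arc avoiding a family of arcs of small total length. -/
lemma exists_point {ι : Type*} [DecidableEq ι] (Q : Finset ι) (f a : ι → ℝ) (ap fp : ℝ)
    (hf0 : ∀ q ∈ Q, 0 ≤ f q)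
    (hfp : 0 < fp) (hfp1 : fp ≤ 1) (hsum : ∑ q ∈ Q, f q < fp) :
    ∃ s : ℝ, 0 ≤ s ∧ s < 1 ∧ Int.fract (s - ap) < fp ∧ ∀ q ∈ Q, f q ≤ Int.fract (s - a q) := by
  classical
  set TS := ∑ q ∈ Q, f q with hTS
  have hTS0 : 0 ≤ TS := Finset.sum_nonneg hf0
  obtain ⟨N, hN⟩ := exists_nat_gt ((2*Q.card + 2) / (fp - TS))
  have hdpos : 0 < fp - TS := by linarith
  have hNpos : 0 < N := by
    by_contra h
    push_neg at h
    interval_cases N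
    simp only [Nat.cast_zero] at hN
    have : 0 < (2*(Q.card:ℝ) + 2) / (fp - TS) := by positivity
    linarith
  have hNR : (0:ℝ) < N := by exact_mod_cast hNpos
  have hNkey : (2*(Q.card:ℝ) + 2) < N * (fp - TS) := by
    rw [div_lt_iff₀ hdpos] at hN
    nlinarith
  set C := (Finset.range N).filter (fun t : ℕ => (t:ℝ) < N * fp) with hC
  have hCcard : (N:ℝ) * fp - 1 ≤ C.card := by
    set M := ⌊(N:ℝ)*fp⌋.toNat with hM
    have h0 : (0:ℤ) ≤ ⌊(N:ℝ)*fp⌋ := Int.floor_nonneg.mpr (by positivity)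
    have h1 : ((M:ℕ):ℝ) = ((⌊(N:ℝ)*fp⌋ : ℤ) : ℝ) := by
      rw [hM]
      exact_mod_cast congrArg (Int.cast : ℤ → ℝ) (Int.toNat_of_nonneg h0)
    have hMN : (M:ℝ) ≤ (N:ℝ)*fp := by
      rw [h1]
      exact Int.floor_le _
    have hsub : Finset.range M ⊆ C := by
      intro t ht
      rw [Finset.mem_range] at ht
      have h1 : (t:ℝ) < M := by exact_mod_cast ht
      have h2 : (t:ℝ) < N * fp := lt_of_lt_of_le h1 hMN
      have h3 : t < N := by
        have : (t:ℝ) < N := lt_of_lt_of_le h2 (by nlinarith)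
        exact_mod_cast this
      rw [hC, Finset.mem_filter, Finset.mem_range]
      exact ⟨h3, h2⟩
    have := Finset.card_le_card hsub
    rw [Finset.card_range] at this
    have hMf : (N:ℝ)*fp - 1 < M := by
      rw [h1]
      exact Int.sub_one_lt_floor _
    have : (M:ℝ) ≤ C.card := by exact_mod_cast this
    linarith
  set Bad : ι → Finset ℕ := fun q => C.filter (fun t : ℕ => Int.fract ((t:ℝ)/N + (ap - a q)) < f q)
    with hBad
  have hBadCard : ∀ q ∈ Q, ((Bad q).card : ℝ) ≤ N * f q + 2 := by
    intro q hq
    have hsub : Bad q ⊆ (Finset.range N).filter (fun t : ℕ => Int.fract ((t:ℝ)/N + (ap - a q)) < f q) := by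
      intro t ht
      simp only [hBad, hC, Finset.mem_filter, Finset.mem_range] at ht ⊢
      exact ⟨ht.1.1, ht.2⟩
    have h1 : ((Bad q).card : ℝ) ≤
        (((Finset.range N).filter (fun t : ℕ => Int.fract ((t:ℝ)/N + (ap - a q)) < f q)).card : ℝ) := by
      exact_mod_cast Finset.card_le_card hsub
    exact h1.trans (arc_count N (ap - a q) (f q) (hf0 q hq))
  have hgood : ∃ t ∈ C, ∀ q ∈ Q, t ∉ Bad q := by
    by_contra h
    push_neg at h
    have hsub : C ⊆ Q.biUnion Bad := by
      intro t ht
      obtain ⟨q, hq, hb⟩ := h t ht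
      exact Finset.mem_biUnion.mpr ⟨q, hq, hb⟩
    have h1 : (C.card : ℝ) ≤ ∑ q ∈ Q, ((Bad q).card : ℝ) := by
      have := (Finset.card_le_card hsub).trans (Finset.card_biUnion_le)
      exact_mod_cast this
    have h2 : ∑ q ∈ Q, ((Bad q).card : ℝ) ≤ ∑ q ∈ Q, ((N:ℝ) * f q + 2) :=
      Finset.sum_le_sum hBadCard
    have h3 : ∑ q ∈ Q, ((N:ℝ) * f q + 2) = N * TS + 2 * Q.card := by
      rw [Finset.sum_add_distrib, ← Finset.mul_sum]
      simp [mul_comm, hTS]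
    nlinarith
  obtain ⟨t, htC, htq⟩ := hgood
  rw [hC, Finset.mem_filter, Finset.mem_range] at htC
  obtain ⟨htN, htfp⟩ := htC
  have htN' : (t:ℝ) < N := by exact_mod_cast htN
  have htdiv0 : 0 ≤ (t:ℝ)/N := by positivity
  have htdiv1 : (t:ℝ)/N < 1 := by rw [div_lt_one hNR]; exact htN'
  refine ⟨Int.fract (ap + (t:ℝ)/N), Int.fract_nonneg _, Int.fract_lt_one _, ?_, ?_⟩
  · have : Int.fract (ap + (t:ℝ)/N) - ap = (t:ℝ)/N + (-⌊ap + (t:ℝ)/N⌋ : ℤ) := by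
      simp only [Int.fract]; push_cast; ring
    rw [this, Int.fract_add_intCast, Int.fract_eq_self.mpr ⟨htdiv0, htdiv1⟩]
    rw [div_lt_iff₀ hNR]
    linarith [htfp]
  · intro q hq
    have hnb := htq q hq
    rw [hBad, Finset.mem_filter] at hnb
    push_neg at hnb
    have hfr : Int.fract (Int.fract (ap + (t:ℝ)/N) - a q) = Int.fract ((t:ℝ)/N + (ap - a q)) := by
      have : Int.fract (ap + (t:ℝ)/N) - a q = ((t:ℝ)/N + (ap - a q)) + (-⌊ap + (t:ℝ)/N⌋ : ℤ) := by
        simp only [Int.fract]; push_cast; ring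
      rw [this, Int.fract_add_intCast]
    rw [hfr]
    exact hnb (by rw [hC, Finset.mem_filter, Finset.mem_range]; exact ⟨htN, htfp⟩)

open Finset

/-- Crux rounding lemma: one can choose a rounding offset `s` so that the rounded
piece values (which jump by `⌊W q⌋` or `⌊W q⌋+1`) are maximized at `p`. -/
lemma crux (n : ℕ) (hn : 0 < n) (W a : Fin n → ℝ) (p : Fin n)
    (hW : ∀ q, W q ≤ W p + 1/n) :
    ∃ s : ℝ, 0 ≤ s ∧ s < 1 ∧ ∀ q,
      (⌊W q⌋ : ℤ) + (if Int.fract (s - a q) < Int.fract (W q) then 1 else 0) ≤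
      (⌊W p⌋ : ℤ) + (if Int.fract (s - a p) < Int.fract (W p) then 1 else 0) := by
  classical
  have hnR : (1:ℝ) ≤ n := by exact_mod_cast hn
  have hn0 : (0:ℝ) < n := by exact_mod_cast hn
  by_cases hn1 : n = 1
  · refine ⟨0, le_rfl, one_pos, fun q => ?_⟩
    have hq : q = p := by
      subst hn1
      exact Subsingleton.elim q p
    rw [hq]
  have hn2 : 2 ≤ n := by omega
  have hn2R : (2:ℝ) ≤ n := by exact_mod_cast hn2
  have hinv1 : (1:ℝ)/n < 1 := by
    rw [div_lt_one hn0]; linarith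
  have hfloor : ∀ q, ⌊W q⌋ ≤ ⌊W p⌋ + 1 := by
    intro q
    have h1 : (⌊W q⌋:ℝ) ≤ W q := Int.floor_le _
    have h2 : W p < ⌊W p⌋ + 1 := Int.lt_floor_add_one _
    have h3 : (⌊W q⌋:ℝ) < (⌊W p⌋:ℝ) + 2 := by
      have := hW q
      push_cast
      linarith
    have h4 : ⌊W q⌋ < ⌊W p⌋ + 2 := by exact_mod_cast h3
    omega
  have hcardQ : ∀ Q : Finset (Fin n), p ∉ Q → (Q.card : ℝ) ≤ (n:ℝ) - 1 := by
    intro Q hpQ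
    have hsub : Q ⊆ Finset.univ.erase p := by
      intro q hq
      exact Finset.mem_erase.mpr ⟨fun h => hpQ (h ▸ hq), Finset.mem_univ _⟩
    have h := Finset.card_le_card hsub
    rw [Finset.card_erase_of_mem (Finset.mem_univ p), Finset.card_univ, Fintype.card_fin] at h
    have h2 : (Q.card : ℝ) ≤ ((n-1 : ℕ) : ℝ) := by exact_mod_cast h
    refine h2.trans ?_
    push_cast [Nat.cast_sub hn]
    linarith
  by_cases hfp : Int.fract (W p) = 0
  · -- own fractional part is zero
    have hWp : W p = (⌊W p⌋:ℝ) := by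
      have h := hfp
      rw [Int.fract] at h
      linarith
    have hfq : ∀ q, ⌊W q⌋ ≤ ⌊W p⌋ := by
      intro q
      have h1 : (⌊W q⌋:ℝ) ≤ W q := Int.floor_le _
      have h3 : (⌊W q⌋:ℝ) < (⌊W p⌋:ℝ) + 1 := by
        have := hW q
        linarith [hWp]
      have h4 : ⌊W q⌋ < ⌊W p⌋ + 1 := by exact_mod_cast h3
      omega
    set Q := Finset.univ.filter (fun q : Fin n => q ≠ p ∧ ⌊W q⌋ = ⌊W p⌋) with hQ
    have hpQ : p ∉ Q := by simp [hQ]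
    have hsum : ∑ q ∈ Q, Int.fract (W q) < 1 := by
      have hb : ∀ q ∈ Q, Int.fract (W q) ≤ 1/n := by
        intro q hq
        rw [hQ, Finset.mem_filter] at hq
        have hfl : ⌊W q⌋ = ⌊W p⌋ := hq.2.2
        have : Int.fract (W q) = W q - (⌊W p⌋:ℝ) := by
          rw [Int.fract, hfl]
        rw [this]
        have := hW q
        linarith [hWp]
      have h1 : ∑ q ∈ Q, Int.fract (W q) ≤ Q.card • ((1:ℝ)/n) :=
        Finset.sum_le_card_nsmul Q _ _ hb
      rw [nsmul_eq_mul] at h1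
      have h2 := hcardQ Q hpQ
      have h3 : (Q.card:ℝ) * (1/n) ≤ ((n:ℝ)-1) * (1/n) := by
        apply mul_le_mul_of_nonneg_right h2
        positivity
      have h4 : ((n:ℝ)-1) * (1/n) < 1 := by
        rw [sub_mul, one_mul]
        have : (n:ℝ) * (1/n) = 1 := by field_simp
        rw [this]
        have : (0:ℝ) < 1/n := by positivity
        linarith
      linarith
    obtain ⟨s, hs0, hs1, _, hsQ⟩ := exists_point Q (fun q => Int.fract (W q)) a 0 1
      (fun q _ => Int.fract_nonneg _) one_pos le_rfl hsum
    refine ⟨s, hs0, hs1, fun q => ?_⟩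
    by_cases hqp : q = p
    · rw [hqp]
    by_cases hqQ : ⌊W q⌋ = ⌊W p⌋
    · have hmem : q ∈ Q := by
        rw [hQ, Finset.mem_filter]
        exact ⟨Finset.mem_univ _, hqp, hqQ⟩
      have h0 := hsQ q hmem
      rw [if_neg (not_lt.mpr h0), hqQ]
      split_ifs <;> omega
    · have h5 : ⌊W q⌋ ≤ ⌊W p⌋ - 1 := by
        have := hfq q
        omega
      split_ifs <;> omega
  · -- own fractional part is positive
    have hfp0 : 0 < Int.fract (W p) := lt_of_le_of_ne (Int.fract_nonneg _) (Ne.symm hfp)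
    have hfp1 : Int.fract (W p) < 1 := Int.fract_lt_one _
    set Q := Finset.univ.filter (fun q : Fin n => ⌊W q⌋ = ⌊W p⌋ + 1) with hQ
    have hpQ : p ∉ Q := by
      rw [hQ, Finset.mem_filter]
      rintro ⟨-, h⟩
      omega
    have hsum : ∑ q ∈ Q, Int.fract (W q) < Int.fract (W p) := by
      have hb : ∀ q ∈ Q, Int.fract (W q) ≤ Int.fract (W p) + 1/n - 1 := by
        intro q hq
        rw [hQ, Finset.mem_filter] at hq
        have h1 : Int.fract (W q) = W q - (⌊W p⌋:ℝ) - 1 := by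
          rw [Int.fract, hq.2]
          push_cast
          ring
        have h2 : Int.fract (W p) = W p - (⌊W p⌋:ℝ) := by rw [Int.fract]
        rw [h1, h2]
        have := hW q
        linarith
      rcases Finset.eq_empty_or_nonempty Q with hQe | hQne
      · rw [hQe]
        simpa using hfp0
      · obtain ⟨q0, hq0⟩ := hQne
        have hXpos : 0 ≤ Int.fract (W p) + 1/n - 1 :=
          (Int.fract_nonneg (W q0)).trans (hb q0 hq0)
        have h1 : ∑ q ∈ Q, Int.fract (W q) ≤ Q.card • (Int.fract (W p) + 1/n - 1) :=
          Finset.sum_le_card_nsmul Q _ _ hb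
        rw [nsmul_eq_mul] at h1
        have h2 := hcardQ Q hpQ
        have h3 : (Q.card:ℝ) * (Int.fract (W p) + 1/n - 1) ≤
            ((n:ℝ)-1) * (Int.fract (W p) + 1/n - 1) :=
          mul_le_mul_of_nonneg_right h2 hXpos
        have hν : (1:ℝ)/n * n = 1 := by field_simp
        have hkey : ((n:ℝ) - 1) * (Int.fract (W p) + 1/n - 1) < Int.fract (W p) := by
          have hhint : ((n:ℝ) - 2) * Int.fract (W p) ≤ (n:ℝ) - 2 := by nlinarith
          nlinarith
        linarith
    obtain ⟨s, hs0, hs1, hsp, hsQ⟩ := exists_point Q (fun q => Int.fract (W q)) a (a p)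
      (Int.fract (W p)) (fun q _ => Int.fract_nonneg _) hfp0 hfp1.le hsum
    refine ⟨s, hs0, hs1, fun q => ?_⟩
    rw [if_pos hsp]
    by_cases hqQ : q ∈ Q
    · have h0 := hsQ q hqQ
      rw [if_neg (not_lt.mpr h0)]
      rw [hQ, Finset.mem_filter] at hqQ
      omega
    · have h5 : ⌊W q⌋ ≤ ⌊W p⌋ := by
        have h6 := hfloor q
        rw [hQ, Finset.mem_filter] at hqQ
        have : ¬ (⌊W q⌋ = ⌊W p⌋ + 1) := fun h => hqQ ⟨Finset.mem_univ _, h⟩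
        omega
      split_ifs <;> omega

open MeasureTheory intervalIntegral

section IntegralLemmas

variable {m : ℕ} (Vi : Finset (Fin m)) (g : ℝ → ℝ)

/-- the valued set is measurable -/
lemma valued_measurableSet :
    MeasurableSet {x : ℝ | ∃ j ∈ Vi, (j : ℝ) / m ≤ x ∧ x ≤ ((j : ℝ) + 1) / m} := by
  have h : {x : ℝ | ∃ j ∈ Vi, (j : ℝ) / m ≤ x ∧ x ≤ ((j : ℝ) + 1) / m}
      = ⋃ j ∈ (Vi : Set (Fin m)), Set.Icc ((j : ℝ)/m) (((j : ℝ)+1)/m) := by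
    ext x
    simp only [Set.mem_iUnion, Set.mem_Icc, Set.mem_setOf_eq, Finset.mem_coe]
    tauto
  rw [h]
  exact MeasurableSet.biUnion (Vi : Set (Fin m)).to_countable (fun j _ => measurableSet_Icc)

lemma dens_intervalIntegrable
    (hg : ∀ x, g x = if ∃ j ∈ Vi, (j : ℝ) / m ≤ x ∧ x ≤ ((j : ℝ) + 1) / m
      then (m : ℝ) / (Vi.card : ℝ) else 0) (a b : ℝ) :
    IntervalIntegrable g MeasureTheory.volume a b := by
  classical
  have hmeas : Measurable g := by
    have hfun : g = fun x =>
        if x ∈ {x : ℝ | ∃ j ∈ Vi, (j : ℝ) / m ≤ x ∧ x ≤ ((j : ℝ) + 1) / m}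
        then (m : ℝ) / (Vi.card : ℝ) else 0 := by
      funext x
      rw [hg x]
      congr 1
    rw [hfun]
    exact Measurable.ite (valued_measurableSet Vi) measurable_const measurable_const
  rw [intervalIntegrable_iff]
  apply MeasureTheory.Measure.integrableOn_of_bounded
  · rw [Set.uIoc]
    exact (measure_Ioc_lt_top).ne
  · exact hmeas.aestronglyMeasurable
  · filter_upwards with x
    rw [hg x]
    have hc : (0:ℝ) ≤ (m : ℝ) / (Vi.card : ℝ) := by positivity
    split_ifs
    · rw [Real.norm_eq_abs, abs_of_nonneg hc]
    · rw [norm_zero]; exact hc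

lemma mem_item_iff (hm : 0 < m) (j : Fin m) (x : ℝ)
    (h1 : (j : ℝ)/m < x) (h2 : x < ((j : ℝ)+1)/m) :
    (∃ j' ∈ Vi, (j' : ℝ) / m ≤ x ∧ x ≤ ((j' : ℝ) + 1) / m) ↔ j ∈ Vi := by
  have hmR : (0:ℝ) < m := by exact_mod_cast hm
  constructor
  · rintro ⟨j', hj', hj'1, hj'2⟩
    have e1 : (j' : ℝ) < (j : ℝ) + 1 := by
      have h3 : (j' : ℝ)/m < ((j : ℝ)+1)/m := lt_of_le_of_lt hj'1 h2
      exact (div_lt_div_iff_of_pos_right hmR).mp h3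
    have e2 : (j : ℝ) < (j' : ℝ) + 1 := by
      have h3 : (j : ℝ)/m < ((j' : ℝ)+1)/m := lt_of_lt_of_le h1 hj'2
      exact (div_lt_div_iff_of_pos_right hmR).mp h3
    have e1' : (j' : ℕ) < (j : ℕ) + 1 := by exact_mod_cast e1
    have e2' : (j : ℕ) < (j' : ℕ) + 1 := by exact_mod_cast e2
    have : j' = j := by
      apply Fin.ext
      omega
    rwa [this] at hj'
  · intro hj
    exact ⟨j, hj, h1.le, h2.le⟩

lemma integral_sub_item (hm : 0 < m)
    (hg : ∀ x, g x = if ∃ j ∈ Vi, (j : ℝ) / m ≤ x ∧ x ≤ ((j : ℝ) + 1) / m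
      then (m : ℝ) / (Vi.card : ℝ) else 0) (j : Fin m)
    (a b : ℝ) (ha : (j : ℝ)/m ≤ a) (hab : a ≤ b) (hb : b ≤ ((j : ℝ)+1)/m) :
    ∫ x in a..b, g x = (b - a) * ((m : ℝ)/(Vi.card : ℝ)) * (if j ∈ Vi then 1 else 0) := by
  classical
  set c0 : ℝ := if j ∈ Vi then (m : ℝ)/(Vi.card : ℝ) else 0 with hc0
  have hae : ∀ᵐ x ∂(volume : Measure ℝ), x ∈ Set.uIoc a b → g x = c0 := by
    rw [MeasureTheory.ae_iff]
    have hnull : (volume : Measure ℝ) {b} = 0 := Real.volume_singleton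
    refine MeasureTheory.measure_mono_null ?_ hnull
    · intro x hx
      simp only [Set.mem_setOf_eq] at hx
      push_neg at hx
      obtain ⟨hxI, hxg⟩ := hx
      rw [Set.uIoc_of_le hab] at hxI
      by_contra hxb
      apply hxg
      have hxb' : x < b := lt_of_le_of_ne hxI.2 (fun h => hxb h)
      have hoo1 : (j : ℝ)/m < x := lt_of_le_of_lt ha hxI.1
      have hoo2 : x < ((j : ℝ)+1)/m := lt_of_lt_of_le hxb' hb
      rw [hg x, hc0]
      by_cases hjV : j ∈ Vi
      · rw [if_pos ((mem_item_iff Vi hm j x hoo1 hoo2).mpr hjV), if_pos hjV]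
      · rw [if_neg (fun h => hjV ((mem_item_iff Vi hm j x hoo1 hoo2).mp h)), if_neg hjV]
  rw [intervalIntegral.integral_congr_ae hae, intervalIntegral.integral_const, smul_eq_mul, hc0]
  split_ifs <;> ring

lemma integral_nat (hm : 0 < m)
    (hg : ∀ x, g x = if ∃ j ∈ Vi, (j : ℝ) / m ≤ x ∧ x ≤ ((j : ℝ) + 1) / m
      then (m : ℝ) / (Vi.card : ℝ) else 0) :
    ∀ (c : ℕ), c ≤ m →
    ∫ x in (0:ℝ)..((c:ℝ)/m), g x =
      ((Vi.filter fun j : Fin m => (j : ℕ) < c).card : ℝ) / (Vi.card : ℝ) := by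
  classical
  have hmR : (0:ℝ) < m := by exact_mod_cast hm
  intro c
  induction c with
  | zero =>
    intro _
    norm_num
  | succ c ih =>
    intro hc
    have hc' : c ≤ m := by omega
    have hcm : c < m := by omega
    set j : Fin m := ⟨c, hcm⟩ with hj
    have hjc : (j : ℕ) = c := rfl
    have hjR : (j : ℝ) = (c : ℝ) := by rw [← hjc]
    have hII1 := dens_intervalIntegrable Vi g hg 0 ((c:ℝ)/m)
    have hII2 := dens_intervalIntegrable Vi g hg ((c:ℝ)/m) (((c:ℝ)+1)/m)
    have hadd := intervalIntegral.integral_add_adjacent_intervals hII1 hII2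
    have hstep := integral_sub_item Vi g hm hg j ((c:ℝ)/m) (((c:ℝ)+1)/m)
      (by rw [hjR]) (by rw [div_le_div_iff_of_pos_right hmR]; linarith)
      (by rw [hjR])
    have hcount : ((Vi.filter fun j' : Fin m => (j' : ℕ) < c + 1).card : ℝ)
        = ((Vi.filter fun j' : Fin m => (j' : ℕ) < c).card : ℝ) + (if j ∈ Vi then 1 else 0) := by
      have hor : (Vi.filter fun j' : Fin m => (j' : ℕ) < c + 1)
          = (Vi.filter fun j' : Fin m => (j' : ℕ) < c) ∪ (Vi.filter fun j' : Fin m => j' = j) := by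
        rw [← Finset.filter_or]
        apply Finset.filter_congr
        intro j' _
        simp only [Fin.ext_iff, hjc]
        constructor
        · intro h
          omega
        · intro h
          omega
      have hdisj : Disjoint (Vi.filter fun j' : Fin m => (j' : ℕ) < c) (Vi.filter fun j' : Fin m => j' = j) := by
        rw [Finset.disjoint_left]
        intro x hx1 hx2
        rw [Finset.mem_filter] at hx1 hx2
        rw [hx2.2] at hx1
        omega
      rw [hor, Finset.card_union_of_disjoint hdisj, Finset.filter_eq']
      split_ifs <;> simp
    have hfrac : ((c:ℝ)+1)/m = (((c+1 : ℕ)):ℝ)/m := by push_cast; ring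
    rw [← hfrac, ← hadd, ih hc', hstep, hcount]
    have hdiff : ((c:ℝ)+1)/m - (c:ℝ)/m = 1/m := by ring
    rw [hdiff]
    have hμ : (0:ℝ) ≤ (Vi.card : ℝ) := by positivity
    rcases eq_or_lt_of_le hμ with hμ0 | hμpos
    · rw [← hμ0]
      simp
    · split_ifs with h
      · field_simp
        try ring
      · simp

lemma integral_gen (hm : 0 < m)
    (hg : ∀ x, g x = if ∃ j ∈ Vi, (j : ℝ) / m ≤ x ∧ x ≤ ((j : ℝ) + 1) / m
      then (m : ℝ) / (Vi.card : ℝ) else 0)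
    (B : ℕ) (hB : B < m) (x : ℝ) (h1 : (B:ℝ)/m ≤ x) (h2 : x ≤ ((B:ℝ)+1)/m) :
    ∫ t in (0:ℝ)..x, g t = ((Vi.filter fun j : Fin m => (j : ℕ) < B).card : ℝ)/(Vi.card : ℝ)
      + (x - (B:ℝ)/m) * ((m : ℝ)/(Vi.card : ℝ))
        * (if (⟨B, hB⟩ : Fin m) ∈ Vi then 1 else 0) := by
  have hII1 := dens_intervalIntegrable Vi g hg 0 ((B:ℝ)/m)
  have hII2 := dens_intervalIntegrable Vi g hg ((B:ℝ)/m) x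
  have hadd := intervalIntegral.integral_add_adjacent_intervals hII1 hII2
  have hstep := integral_sub_item Vi g hm hg ⟨B, hB⟩ ((B:ℝ)/m) x (le_refl _) h1 h2
  rw [← hadd, integral_nat Vi g hm hg B hB.le]
  rw [hstep]

end IntegralLemmas

open MeasureTheory intervalIntegral

/-- counting step -/
lemma count_succ {m : ℕ} (Vi : Finset (Fin m)) (bN : ℕ) (hbNm : bN < m) :
    (Vi.filter fun j' : Fin m => (j' : ℕ) < bN + 1).card
      = (Vi.filter fun j' : Fin m => (j' : ℕ) < bN).card
        + (if (⟨bN, hbNm⟩ : Fin m) ∈ Vi then 1 else 0) := by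
  classical
  set j : Fin m := ⟨bN, hbNm⟩ with hj
  have hor : (Vi.filter fun j' : Fin m => (j' : ℕ) < bN + 1)
      = (Vi.filter fun j' : Fin m => (j' : ℕ) < bN) ∪ (Vi.filter fun j' : Fin m => j' = j) := by
    rw [← Finset.filter_or]
    apply Finset.filter_congr
    intro j' _
    simp only [Fin.ext_iff, hj]
    constructor
    · intro h; omega
    · intro h; omega
  have hdisj : Disjoint (Vi.filter fun j' : Fin m => (j' : ℕ) < bN) (Vi.filter fun j' : Fin m => j' = j) := by
    rw [Finset.disjoint_left]
    intro x hx1 hx2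
    rw [Finset.mem_filter] at hx1 hx2
    rw [hx2.2] at hx1
    simp only [hj] at hx1
    omega
  rw [hor, Finset.card_union_of_disjoint hdisj, Finset.filter_eq']
  split_ifs <;> simp

lemma count_between {m : ℕ} (Vi : Finset (Fin m)) (c1 c2 : ℕ) (h12 : c1 ≤ c2) :
    (Vi.filter fun j : Fin m => (j : ℕ) < c2).card
      = (Vi.filter fun j : Fin m => (j : ℕ) < c1).card
        + (Vi.filter fun j : Fin m => c1 ≤ (j : ℕ) ∧ (j : ℕ) < c2).card := by
  classical
  have hor : (Vi.filter fun j : Fin m => (j : ℕ) < c2)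
      = (Vi.filter fun j : Fin m => (j : ℕ) < c1) ∪ (Vi.filter fun j : Fin m => c1 ≤ (j : ℕ) ∧ (j : ℕ) < c2) := by
    rw [← Finset.filter_or]
    apply Finset.filter_congr
    intro j _
    constructor
    · intro h; omega
    · intro h; rcases h with h | h <;> omega
  have hdisj : Disjoint (Vi.filter fun j : Fin m => (j : ℕ) < c1)
      (Vi.filter fun j : Fin m => c1 ≤ (j : ℕ) ∧ (j : ℕ) < c2) := by
    rw [Finset.disjoint_left]
    intro x hx1 hx2
    rw [Finset.mem_filter] at hx1 hx2
    omega
  rw [hor, Finset.card_union_of_disjoint hdisj]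

/-- the scaled integral, for a point inside item `bN`. -/
lemma r_formula {m : ℕ} (Vi : Finset (Fin m)) (g : ℝ → ℝ) (hm : 0 < m) (hVi : Vi.Nonempty)
    (hg : ∀ x, g x = if ∃ j ∈ Vi, (j : ℝ) / m ≤ x ∧ x ≤ ((j : ℝ) + 1) / m
      then (m : ℝ) / (Vi.card : ℝ) else 0)
    (t : ℝ) (bN : ℕ) (hbNm : bN < m) (hbN : (bN : ℤ) = ⌊(m:ℝ) * t⌋) :
    (Vi.card : ℝ) * ∫ x in (0:ℝ)..t, g x =
      ((Vi.filter fun j : Fin m => (j : ℕ) < bN).card : ℝ)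
      + Int.fract ((m:ℝ) * t) * (if (⟨bN, hbNm⟩ : Fin m) ∈ Vi then 1 else 0) := by
  classical
  have hmR : (0:ℝ) < m := by exact_mod_cast hm
  have hμR : (0:ℝ) < (Vi.card : ℝ) := by exact_mod_cast Finset.card_pos.mpr hVi
  have hfl1 : ((bN:ℝ)) ≤ (m:ℝ) * t := by
    have h := Int.floor_le ((m:ℝ) * t)
    rw [← hbN] at h
    exact_mod_cast h
  have hfl2 : (m:ℝ) * t < (bN:ℝ) + 1 := by
    have h := Int.lt_floor_add_one ((m:ℝ) * t)
    rw [← hbN] at h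
    exact_mod_cast h
  have h1 : (bN:ℝ)/m ≤ t := by rw [div_le_iff₀ hmR]; nlinarith
  have h2 : t ≤ ((bN:ℝ)+1)/m := by rw [le_div_iff₀ hmR]; nlinarith
  have hfr : Int.fract ((m:ℝ)*t) = (m:ℝ)*t - (bN:ℝ) := by
    rw [Int.fract, ← hbN]
    norm_num
  rw [integral_gen Vi g hm hg bN hbNm t h1 h2, hfr]
  split_ifs
  · field_simp
  · field_simp

/-- ceiling of an integer plus small fraction minus offset -/
lemma ceil_shift (cnt : ℕ) (θ s : ℝ) (hθ0 : 0 ≤ θ) (hθ1 : θ < 1) (hs0 : 0 ≤ s) (hs1 : s < 1) :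
    ⌈((cnt:ℝ) + θ) - s⌉ = (cnt : ℤ) + (if s < θ then 1 else 0) := by
  have hdec : ((cnt:ℝ) + θ) - s = (θ - s) + ((cnt : ℤ) : ℝ) := by push_cast; ring
  rw [hdec, Int.ceil_add_intCast]
  split_ifs with h
  · have : ⌈θ - s⌉ = 1 := by
      rw [Int.ceil_eq_iff] <;> push_cast
      constructor <;> linarith
    omega
  · have : ⌈θ - s⌉ = 0 := by
      rw [Int.ceil_eq_iff] <;> push_cast
      constructor
      · linarith
      · linarith [not_lt.mp h]
    omega

open MeasureTheory intervalIntegral Finset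

open Classical in
/-- Items `1, …, m` lie on a line, agent `i` values the nonempty set
`V i` of items, every item is valued by at most one agent, and `w i` is the continuous
valuation on `[0,1]` with density `m / |V i|` on `⋃_{j ∈ V i} [j/m, (j+1)/m]` and `0`
elsewhere. With `ε = min_i 1/(n |V i|)`: if the cake-cutting instance `(w 1, …, w n)`
admits a contiguous `ε`-envy-free allocation with permutation `π`, then it admits a
contiguous exactly envy-free allocation with the same permutation `π` in which every cut
point is an integer multiple of `1/m`; consequently the discrete instance `(V 1, …, V n)`
admits a contiguous envy-free allocation. -/
theorem exact_from_approx_disjoint_discrete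
    (m n : ℕ) (hm : 0 < m) (hn : 0 < n)
    (V : Fin n → Finset (Fin m))
    (hne : ∀ i, (V i).Nonempty)
    (hdisj : ∀ i i', i ≠ i' → Disjoint (V i) (V i'))
    (w : Fin n → ℝ → ℝ)
    (hw : ∀ i x, w i x =
      if ∃ j ∈ V i, (j : ℝ) / m ≤ x ∧ x ≤ ((j : ℝ) + 1) / m
      then (m : ℝ) / ((V i).card : ℝ) else 0)
    (y : Fin (n + 1) → ℝ) (π : Equiv.Perm (Fin n))
    (hmono : Monotone y) (hy0 : y 0 = 0) (hy1 : y (Fin.last n) = 1)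
    (hEF : ∀ i j : Fin n,
      (∫ x in (y (π i).castSucc)..(y (π i).succ), w i x) ≥
        (∫ x in (y (π j).castSucc)..(y (π j).succ), w i x) -
          ⨅ i' : Fin n, 1 / ((n : ℝ) * ((V i').card : ℝ))) :
    (∃ y' : Fin (n + 1) → ℝ,
      Monotone y' ∧ y' 0 = 0 ∧ y' (Fin.last n) = 1 ∧
      (∀ k : Fin (n + 1), ∃ c : ℕ, y' k = (c : ℝ) / m) ∧
      (∀ i j : Fin n,
        (∫ x in (y' (π i).castSucc)..(y' (π i).succ), w i x) ≥
          (∫ x in (y' (π j).castSucc)..(y' (π j).succ), w i x))) ∧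
    (∃ owner : Fin m → Fin n,
      ContigAlloc owner ∧
      ∀ i j : Fin n, discVal V owner i i ≥ discVal V owner i j) := by
  classical
  have hmR : (0:ℝ) < m := by exact_mod_cast hm
  have hμpos : ∀ i, 0 < (V i).card := fun i => Finset.card_pos.mpr (hne i)
  have hμR : ∀ i, (0:ℝ) < ((V i).card : ℝ) := fun i => by exact_mod_cast hμpos i
  have hInt : ∀ (i : Fin n) (a b : ℝ), IntervalIntegrable (w i) MeasureTheory.volume a b :=
    fun i a b => dens_intervalIntegrable (V i) (w i) (hw i) a b
  have hsplit : ∀ (i : Fin n) (a b : ℝ),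
      (∫ x in a..b, w i x) = (∫ x in (0:ℝ)..b, w i x) - (∫ x in (0:ℝ)..a, w i x) := by
    intro i a b
    have h := intervalIntegral.integral_add_adjacent_intervals (hInt i 0 a) (hInt i a b)
    linarith
  have hy0' : ∀ k, 0 ≤ y k := by
    intro k; rw [← hy0]; exact hmono (Fin.zero_le k)
  have hy1' : ∀ k, y k ≤ 1 := by
    intro k; rw [← hy1]; exact hmono (Fin.le_last k)
  set r : Fin n → Fin (n+1) → ℝ :=
    fun i k => ((V i).card : ℝ) * ∫ x in (0:ℝ)..(y k), w i x with hrdef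
  -- the crux hypothesis
  have hWle : ∀ (i : Fin n) (q : Fin n),
      (r i q.succ - r i q.castSucc) ≤ (r i (π i).succ - r i (π i).castSucc) + 1/(n:ℝ) := by
    intro i q
    have h := hEF i (π.symm q)
    rw [Equiv.apply_symm_apply] at h
    have hq := hsplit i (y q.castSucc) (y q.succ)
    have hp := hsplit i (y (π i).castSucc) (y (π i).succ)
    have hεle : (⨅ i' : Fin n, 1 / ((n : ℝ) * ((V i').card : ℝ)))
        ≤ 1 / ((n:ℝ) * ((V i).card : ℝ)) := by
      apply ciInf_le
      refine ⟨0, ?_⟩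
      rintro x ⟨i', rfl⟩
      show (0:ℝ) ≤ 1 / ((n:ℝ) * ((V i').card : ℝ))
      exact div_nonneg zero_le_one (mul_nonneg (Nat.cast_nonneg _) (Nat.cast_nonneg _))
    have hμε : ((V i).card : ℝ) * (⨅ i' : Fin n, 1 / ((n:ℝ) * ((V i').card:ℝ))) ≤ 1/(n:ℝ) := by
      have h2 := mul_le_mul_of_nonneg_left hεle (hμR i).le
      have h3 : ((V i).card : ℝ) * (1 / ((n:ℝ) * ((V i).card : ℝ))) = 1/(n:ℝ) := by
        have hn0 : (0:ℝ) < n := by exact_mod_cast hn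
        rw [mul_one_div, div_eq_div_iff (mul_pos hn0 (hμR i)).ne' hn0.ne']
        ring
      linarith
    have hABε : (∫ x in (y q.castSucc)..(y q.succ), w i x)
        ≤ (∫ x in (y (π i).castSucc)..(y (π i).succ), w i x)
          + (⨅ i' : Fin n, 1 / ((n : ℝ) * ((V i').card : ℝ))) := by linarith
    have h4 := mul_le_mul_of_nonneg_left hABε (hμR i).le
    have h5 : ((V i).card : ℝ) * ((∫ x in (y (π i).castSucc)..(y (π i).succ), w i x)
          + (⨅ i' : Fin n, 1 / ((n : ℝ) * ((V i').card : ℝ))))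
        = ((V i).card : ℝ) * (∫ x in (y (π i).castSucc)..(y (π i).succ), w i x)
          + ((V i).card : ℝ) * (⨅ i' : Fin n, 1 / ((n : ℝ) * ((V i').card : ℝ))) := by ring
    have h6 : ((V i).card : ℝ) * (∫ x in (y q.castSucc)..(y q.succ), w i x)
        = r i q.succ - r i q.castSucc := by
      rw [hq]; simp only [hrdef]; ring
    have h7 : ((V i).card : ℝ) * (∫ x in (y (π i).castSucc)..(y (π i).succ), w i x)
        = r i (π i).succ - r i (π i).castSucc := by
      rw [hp]; simp only [hrdef]; ring
    rw [h5, h6, h7] at h4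
    linarith
  have hsgap := fun i : Fin n => crux n hn (fun q => r i q.succ - r i q.castSucc)
    (fun q => r i q.castSucc) (π i) (hWle i)
  choose s hs0 hs1 hgap using hsgap
  have hzgap : ∀ i q : Fin n,
      ⌈r i q.succ - s i⌉ - ⌈r i q.castSucc - s i⌉ ≤
      ⌈r i (π i).succ - s i⌉ - ⌈r i (π i).castSucc - s i⌉ := by
    intro i q
    have h := hgap i q
    rw [ceil_sub_ceil (r i q.castSucc) (r i q.succ) (s i),
        ceil_sub_ceil (r i (π i).castSucc) (r i (π i).succ) (s i)]
    exact h
  -- floor facts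
  have hB0 : ∀ k, 0 ≤ ⌊(m:ℝ) * y k⌋ := by
    intro k
    apply Int.floor_nonneg.mpr
    nlinarith [hy0' k]
  have hBm : ∀ k, ⌊(m:ℝ) * y k⌋ ≤ (m:ℤ) := by
    intro k
    have h1 : (m:ℝ) * y k ≤ ((m:ℤ):ℝ) := by push_cast; nlinarith [hy1' k]
    calc ⌊(m:ℝ)*y k⌋ ≤ ⌊((m:ℤ):ℝ)⌋ := Int.floor_le_floor h1
    _ = (m:ℤ) := Int.floor_intCast _
  set c : Fin (n+1) → ℕ := fun k => (⌊(m:ℝ) * y k⌋).toNat +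
      (if (∃ i : Fin n, ∃ j ∈ V i, ((j:ℕ) : ℤ) = ⌊(m:ℝ) * y k⌋ ∧ s i < Int.fract (r i k))
        then 1 else 0) with hcdef
  have hrval : ∀ (i : Fin n) (k : Fin (n+1)) (bN : ℕ) (hbNm : bN < m),
      ((bN:ℤ) = ⌊(m:ℝ) * y k⌋) →
      r i k = (((V i).filter fun j : Fin m => (j:ℕ) < bN).card : ℝ)
        + Int.fract ((m:ℝ) * y k) * (if (⟨bN, hbNm⟩ : Fin m) ∈ V i then 1 else 0) := by
    intro i k bN hbNm hbN
    simp only [hrdef]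
    exact r_formula (V i) (w i) hm (hne i) (hw i) (y k) bN hbNm hbN
  have hfrV : ∀ (i : Fin n) (k : Fin (n+1)) (bN : ℕ) (hbNm : bN < m)
      (hbN : (bN:ℤ) = ⌊(m:ℝ) * y k⌋), (⟨bN, hbNm⟩ : Fin m) ∈ V i →
      Int.fract (r i k) = Int.fract ((m:ℝ) * y k) := by
    intro i k bN hbNm hbN hmem
    rw [hrval i k bN hbNm hbN, if_pos hmem, mul_one, add_comm, Int.fract_add_natCast, Int.fract_fract]
  have hdir_iff : ∀ (i : Fin n) (k : Fin (n+1)) (bN : ℕ) (hbNm : bN < m)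
      (hbN : (bN:ℤ) = ⌊(m:ℝ) * y k⌋), (⟨bN, hbNm⟩ : Fin m) ∈ V i →
      ((∃ i' : Fin n, ∃ j ∈ V i', ((j:ℕ) : ℤ) = ⌊(m:ℝ) * y k⌋ ∧ s i' < Int.fract (r i' k))
        ↔ s i < Int.fract ((m:ℝ) * y k)) := by
    intro i k bN hbNm hbN hmem
    constructor
    · rintro ⟨i', j', hj'V, hj'eq, hs'⟩
      have hj'val : (j' : ℕ) = bN := by
        have := hj'eq.trans hbN.symm
        exact_mod_cast this
      have hj'j : j' = (⟨bN, hbNm⟩ : Fin m) := Fin.ext hj'val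
      have hi' : i' = i := by
        by_contra hne'
        have hd := hdisj i' i hne'
        rw [Finset.disjoint_left] at hd
        exact hd (hj'j ▸ hj'V) hmem
      rw [hi'] at hs'
      rwa [hfrV i k bN hbNm hbN hmem] at hs'
    · intro hlt
      exact ⟨i, ⟨bN, hbNm⟩, hmem, by exact_mod_cast hbN,
        by rwa [hfrV i k bN hbNm hbN hmem]⟩
  have hc0 : c 0 = 0 := by
    have hif : ¬ (∃ i : Fin n, ∃ j ∈ V i,
        ((j:ℕ) : ℤ) = ⌊(m:ℝ) * y 0⌋ ∧ s i < Int.fract (r i 0)) := by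
      rintro ⟨i, j, -, -, hs'⟩
      have hr0 : r i 0 = 0 := by
        simp only [hrdef]
        rw [hy0, intervalIntegral.integral_same, mul_zero]
      rw [hr0, Int.fract_zero] at hs'
      exact absurd hs' (not_lt.mpr (hs0 i))
    rw [hcdef]
    simp only
    rw [if_neg hif, hy0]
    norm_num
  have hclast : c (Fin.last n) = m := by
    have hfl : ⌊(m:ℝ) * y (Fin.last n)⌋ = (m:ℤ) := by
      rw [hy1, mul_one]
      exact_mod_cast Int.floor_natCast m
    have hif : ¬ (∃ i : Fin n, ∃ j ∈ V i,
        ((j:ℕ) : ℤ) = ⌊(m:ℝ) * y (Fin.last n)⌋ ∧ s i < Int.fract (r i (Fin.last n))) := by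
      rintro ⟨i, j, -, hjeq, -⟩
      rw [hfl] at hjeq
      have h2 := j.isLt
      have h3 : (j:ℕ) = m := by exact_mod_cast hjeq
      omega
    rw [hcdef]
    simp only
    rw [if_neg hif, hfl]
    simp
  have hcmono : ∀ k l : Fin (n+1), k ≤ l → c k ≤ c l := by
    intro k l hkl
    have hyk : y k ≤ y l := hmono hkl
    have hBle : ⌊(m:ℝ)*y k⌋ ≤ ⌊(m:ℝ)*y l⌋ := Int.floor_le_floor (by nlinarith)
    have h0k := hB0 k
    have h0l := hB0 l
    rcases lt_or_eq_of_le hBle with hBlt | hBeq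
    · rw [hcdef]
      simp only
      split_ifs <;> omega
    · rw [hcdef]
      simp only
      have hdd : (∃ i' : Fin n, ∃ j ∈ V i',
            ((j:ℕ):ℤ) = ⌊(m:ℝ)*y k⌋ ∧ s i' < Int.fract (r i' k)) →
          (∃ i' : Fin n, ∃ j ∈ V i',
            ((j:ℕ):ℤ) = ⌊(m:ℝ)*y l⌋ ∧ s i' < Int.fract (r i' l)) := by
        rintro ⟨i', j', hj'V, hj'eq, hs'⟩
        refine ⟨i', j', hj'V, by rw [← hBeq]; exact hj'eq, ?_⟩
        have hbNm : (j':ℕ) < m := j'.isLt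
        have hjj : (⟨(j':ℕ), hbNm⟩ : Fin m) = j' := rfl
        have hfk := hfrV i' k (j':ℕ) hbNm hj'eq (by rw [hjj]; exact hj'V)
        have hfl2 := hfrV i' l (j':ℕ) hbNm (by rw [← hBeq]; exact hj'eq) (by rw [hjj]; exact hj'V)
        rw [hfl2]
        rw [hfk] at hs'
        have hmon : Int.fract ((m:ℝ)*y k) ≤ Int.fract ((m:ℝ)*y l) := by
          rw [Int.fract, Int.fract, hBeq]
          have : (m:ℝ)*y k ≤ (m:ℝ)*y l := by nlinarith
          linarith
        linarith
      split_ifs with h1 h2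
      · omega
      · exact absurd (hdd h1) h2
      · omega
      · omega
  have hcm : ∀ k, c k ≤ m := by
    intro k
    have := hcmono k (Fin.last n) (Fin.le_last k)
    rwa [hclast] at this
  -- central value identity
  have hFc : ∀ (i : Fin n) (k : Fin (n+1)),
      (∫ x in (0:ℝ)..((c k : ℝ)/m), w i x) = ((⌈r i k - s i⌉ : ℤ) : ℝ) / ((V i).card : ℝ) := by
    intro i k
    by_cases hBtop : ⌊(m:ℝ) * y k⌋ = (m:ℤ)
    · have hyk : y k = 1 := by
        have h1 : ((m:ℤ):ℝ) ≤ (m:ℝ)*y k := by rw [← hBtop]; exact Int.floor_le _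
        push_cast at h1
        nlinarith [hy1' k]
      have hck : c k = m := by
        have hif : ¬ (∃ i' : Fin n, ∃ j ∈ V i',
            ((j:ℕ):ℤ) = ⌊(m:ℝ)*y k⌋ ∧ s i' < Int.fract (r i' k)) := by
          rintro ⟨i', j, -, hjeq, -⟩
          rw [hBtop] at hjeq
          have h2 := j.isLt
          have h3 : (j:ℕ) = m := by exact_mod_cast hjeq
          omega
        rw [hcdef]
        simp only
        rw [if_neg hif, hBtop]
        simp
      have hfull : ((V i).filter fun j : Fin m => (j:ℕ) < m) = V i :=
        Finset.filter_true_of_mem (fun j _ => j.isLt)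
      have hrk : r i k = ((V i).card : ℝ) := by
        simp only [hrdef]
        rw [hyk]
        have h4 := integral_nat (V i) (w i) hm (hw i) m le_rfl
        have h5 : ((m:ℕ):ℝ)/(m:ℝ) = (1:ℝ) := by field_simp
        rw [h5] at h4
        rw [h4, hfull]
        rw [div_self (hμR i).ne', mul_one]
      have hz : ⌈r i k - s i⌉ = ((V i).card : ℤ) := by
        rw [hrk, Int.ceil_eq_iff]
        push_cast
        constructor
        · linarith [hs1 i]
        · linarith [hs0 i]
      rw [hck, hz]
      have h4 := integral_nat (V i) (w i) hm (hw i) m le_rfl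
      rw [h4, hfull]
      rw [Int.cast_natCast]
    · have hBlt : ⌊(m:ℝ)*y k⌋ < (m:ℤ) := lt_of_le_of_ne (hBm k) hBtop
      have hbNeq : (((⌊(m:ℝ)*y k⌋).toNat : ℕ):ℤ) = ⌊(m:ℝ)*y k⌋ := Int.toNat_of_nonneg (hB0 k)
      set bN : ℕ := (⌊(m:ℝ)*y k⌋).toNat with hbNdef
      have hbNm : bN < m := by omega
      have hrk := hrval i k bN hbNm hbNeq
      have hθ0 : 0 ≤ Int.fract ((m:ℝ)*y k) := Int.fract_nonneg _
      have hθ1 : Int.fract ((m:ℝ)*y k) < 1 := Int.fract_lt_one _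
      by_cases hjV : (⟨bN, hbNm⟩ : Fin m) ∈ V i
      · have hdir := hdir_iff i k bN hbNm hbNeq hjV
        have hzk : ⌈r i k - s i⌉ =
            ((((V i).filter fun j : Fin m => (j:ℕ) < bN).card : ℕ) : ℤ)
              + (if s i < Int.fract ((m:ℝ)*y k) then 1 else 0) := by
          rw [hrk, if_pos hjV, mul_one]
          exact ceil_shift _ _ (s i) hθ0 hθ1 (hs0 i) (hs1 i)
        by_cases hsθ : s i < Int.fract ((m:ℝ)*y k)
        · have hck : c k = bN + 1 := by
            rw [hcdef]
            simp only
            rw [if_pos (hdir.mpr hsθ)]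
          rw [hck, hzk, if_pos hsθ]
          rw [integral_nat (V i) (w i) hm (hw i) (bN+1) (by omega)]
          rw [count_succ (V i) bN hbNm, if_pos hjV]
          push_cast
          ring
        · have hck : c k = bN := by
            rw [hcdef]
            simp only
            rw [if_neg (fun hh => hsθ (hdir.mp hh)), add_zero]
          rw [hck, hzk, if_neg hsθ]
          rw [integral_nat (V i) (w i) hm (hw i) bN (by omega)]
          push_cast
          ring
      · have hrk0 : r i k = (((V i).filter fun j : Fin m => (j:ℕ) < bN).card : ℝ) := by
          rw [hrk, if_neg hjV, mul_zero, add_zero]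
        have hzk : ⌈r i k - s i⌉ =
            ((((V i).filter fun j : Fin m => (j:ℕ) < bN).card : ℕ) : ℤ) := by
          rw [hrk0, Int.ceil_eq_iff]
          push_cast
          constructor
          · linarith [hs1 i]
          · linarith [hs0 i]
        have hcnt : ((V i).filter fun j : Fin m => (j:ℕ) < bN + 1).card
            = ((V i).filter fun j : Fin m => (j:ℕ) < bN).card := by
          rw [count_succ (V i) bN hbNm, if_neg hjV, add_zero]
        have hck : c k = bN ∨ c k = bN + 1 := by
          rw [hcdef]
          simp only
          split_ifs
          · right; rfl
          · left; rw [add_zero]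
        rcases hck with hck | hck
        · rw [hck, hzk, integral_nat (V i) (w i) hm (hw i) bN (by omega)]
          rw [Int.cast_natCast]
        · rw [hck, hzk, integral_nat (V i) (w i) hm (hw i) (bN+1) (by omega), hcnt]
          rw [Int.cast_natCast]
  -- bridge : counts at cuts equal the ceilings
  have hbridge : ∀ (i : Fin n) (k : Fin (n+1)),
      ((((V i).filter fun j' : Fin m => (j':ℕ) < c k).card : ℕ) : ℝ)
        = ((⌈r i k - s i⌉ : ℤ) : ℝ) := by
    intro i k
    have h1 := hFc i k
    have h2 := integral_nat (V i) (w i) hm (hw i) (c k) (hcm k)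
    rw [h2] at h1
    rw [div_eq_div_iff (hμR i).ne' (hμR i).ne'] at h1
    exact mul_right_cancel₀ (hμR i).ne' h1
  constructor
  · -- cake-cutting part
    have hval : ∀ (i : Fin n) (b : Fin n),
        (∫ x in (((c (b.castSucc) : ℕ):ℝ)/m)..(((c (b.succ) : ℕ):ℝ)/m), w i x)
          = (((⌈r i b.succ - s i⌉ : ℤ):ℝ) - ((⌈r i b.castSucc - s i⌉:ℤ):ℝ)) / ((V i).card:ℝ) := by
      intro i b
      rw [hsplit i (((c (b.castSucc) : ℕ):ℝ)/m) (((c (b.succ) : ℕ):ℝ)/m),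
        hFc i b.castSucc, hFc i b.succ, div_sub_div_same]
    refine ⟨fun k => ((c k : ℕ) : ℝ)/m, ?_, ?_, ?_, ?_, ?_⟩
    · intro k l hkl
      show ((c k : ℕ):ℝ)/m ≤ ((c l : ℕ):ℝ)/m
      have h1 : ((c k : ℕ):ℝ) ≤ ((c l : ℕ):ℝ) := by exact_mod_cast hcmono k l hkl
      rw [div_le_div_iff₀ hmR hmR]
      nlinarith
    · show ((c 0 : ℕ):ℝ)/m = 0
      rw [hc0]; norm_num
    · show ((c (Fin.last n) : ℕ):ℝ)/m = 1
      rw [hclast]; field_simp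
    · intro k; exact ⟨c k, rfl⟩
    · intro i j
      rw [ge_iff_le]
      show (∫ x in (((c ((π j).castSucc) : ℕ):ℝ)/m)..(((c ((π j).succ) : ℕ):ℝ)/m), w i x)
        ≤ (∫ x in (((c ((π i).castSucc) : ℕ):ℝ)/m)..(((c ((π i).succ) : ℕ):ℝ)/m), w i x)
      rw [hval i (π j), hval i (π i), div_le_div_iff₀ (hμR i) (hμR i)]
      have hint := hzgap i (π j)
      have hintR : ((⌈r i (π j).succ - s i⌉ : ℤ):ℝ) - ((⌈r i (π j).castSucc - s i⌉:ℤ):ℝ)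
          ≤ ((⌈r i (π i).succ - s i⌉ : ℤ):ℝ) - ((⌈r i (π i).castSucc - s i⌉:ℤ):ℝ) := by
        exact_mod_cast hint
      nlinarith [hμR i]
  · -- discrete part
    have hfilter_ne : ∀ t : Fin m,
        ((Finset.univ.filter (fun q : Fin n => c q.castSucc ≤ (t:ℕ)))).Nonempty := by
      intro t
      refine ⟨⟨0, hn⟩, ?_⟩
      rw [Finset.mem_filter]
      refine ⟨Finset.mem_univ _, ?_⟩
      have hz : (⟨0, hn⟩ : Fin n).castSucc = (0 : Fin (n+1)) := rfl
      rw [hz, hc0]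
      exact Nat.zero_le _
    set K : Fin m → Fin n :=
      fun t => (Finset.univ.filter (fun q : Fin n => c q.castSucc ≤ (t:ℕ))).max' (hfilter_ne t)
      with hKdef
    have hK1 : ∀ t : Fin m, c ((K t).castSucc) ≤ (t:ℕ) := by
      intro t
      have h := Finset.max'_mem _ (hfilter_ne t)
      rw [Finset.mem_filter] at h
      exact h.2
    have hK2 : ∀ t : Fin m, (t:ℕ) < c ((K t).succ) := by
      intro t
      by_contra hcon
      push_neg at hcon
      by_cases hlast : (K t).succ = Fin.last n
      · rw [hlast, hclast] at hcon
        exact absurd hcon (not_le.mpr t.isLt)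
      · set q' : Fin n := ((K t).succ).castPred hlast with hq'
        have hq'c : q'.castSucc = (K t).succ := Fin.castSucc_castPred _ _
        have hmem : q' ∈ Finset.univ.filter (fun q : Fin n => c q.castSucc ≤ (t:ℕ)) := by
          rw [Finset.mem_filter]
          exact ⟨Finset.mem_univ _, by rw [hq'c]; exact hcon⟩
        have hle : q' ≤ K t := Finset.le_max' _ q' hmem
        have hlt : (K t) < q' := by
          rw [Fin.lt_def]
          have h1 := congrArg Fin.val hq'c
          rw [Fin.coe_castSucc, Fin.val_succ] at h1
          omega
        rw [Fin.le_def] at hle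
        rw [Fin.lt_def] at hlt
        omega
    have hK3 : ∀ (t : Fin m) (q : Fin n), c q.castSucc ≤ (t:ℕ) → (t:ℕ) < c q.succ → K t = q := by
      intro t q h1 h2
      apply le_antisymm
      · by_contra hcon
        push_neg at hcon
        have hqlt : (q:ℕ) < ((K t):ℕ) := by rw [Fin.lt_def] at hcon; exact hcon
        have hle : c q.succ ≤ c ((K t).castSucc) := by
          apply hcmono
          rw [Fin.le_def, Fin.val_succ, Fin.coe_castSucc]
          omega
        have h3 := hK1 t
        omega
      · exact Finset.le_max' _ q (Finset.mem_filter.mpr ⟨Finset.mem_univ _, h1⟩)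
    refine ⟨fun t => π.symm (K t), ?_, ?_⟩
    · intro a t1 t2 t3 h12 h23 ho1 ho3
      have hk1 : K t1 = π a := by
        have h := congrArg π ho1; rwa [Equiv.apply_symm_apply] at h
      have hk3 : K t3 = π a := by
        have h := congrArg π ho3; rwa [Equiv.apply_symm_apply] at h
      have ht12 : (t1:ℕ) ≤ (t2:ℕ) := h12
      have ht23 : (t2:ℕ) ≤ (t3:ℕ) := h23
      have hb1 : c ((π a).castSucc) ≤ (t2:ℕ) := by
        have h := hK1 t1; rw [hk1] at h; omega
      have hb2 : (t2:ℕ) < c ((π a).succ) := by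
        have h := hK2 t3; rw [hk3] at h; omega
      show π.symm (K t2) = a
      rw [hK3 t2 (π a) hb1 hb2, Equiv.symm_apply_apply]
    · intro i j
      have hcastle : ∀ b : Fin n, c (b.castSucc) ≤ c (b.succ) := by
        intro b
        apply hcmono
        rw [Fin.le_def, Fin.val_succ, Fin.coe_castSucc]
        omega
      have hdv : ∀ b : Fin n, discVal V (fun t => π.symm (K t)) i b
          = ((((V i).filter fun t : Fin m =>
              c ((π b).castSucc) ≤ (t:ℕ) ∧ (t:ℕ) < c ((π b).succ)).card : ℕ) : ℝ)
            / ((V i).card : ℝ) := by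
        intro b
        have hdv0 : discVal V (fun t => π.symm (K t)) i b
            = (((V i).filter fun t : Fin m => π.symm (K t) = b).card : ℝ) / ((V i).card : ℝ) := by
          simp only [discVal]
        rw [hdv0]
        have hfeq : ((V i).filter fun t : Fin m => π.symm (K t) = b)
            = ((V i).filter fun t : Fin m =>
              c ((π b).castSucc) ≤ (t:ℕ) ∧ (t:ℕ) < c ((π b).succ)) := by
          apply Finset.filter_congr
          intro t _
          constructor
          · intro h
            have hkb : K t = π b := by
              have h' := congrArg π h; rwa [Equiv.apply_symm_apply] at h'
            rw [← hkb]
            exact ⟨hK1 t, hK2 t⟩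
          · rintro ⟨h1, h2⟩
            rw [hK3 t (π b) h1 h2, Equiv.symm_apply_apply]
        rw [hfeq]
      have hcount : ∀ b : Fin n,
          ((((V i).filter fun t : Fin m =>
              c ((π b).castSucc) ≤ (t:ℕ) ∧ (t:ℕ) < c ((π b).succ)).card : ℕ) : ℝ)
          = ((⌈r i (π b).succ - s i⌉ : ℤ):ℝ) - ((⌈r i (π b).castSucc - s i⌉:ℤ):ℝ) := by
        intro b
        have hcb := count_between (V i) (c ((π b).castSucc)) (c ((π b).succ)) (hcastle (π b))
        have hb1 := hbridge i ((π b).castSucc)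
        have hb2 := hbridge i ((π b).succ)
        have hcbR : ((((V i).filter fun j' : Fin m => (j':ℕ) < c ((π b).succ)).card : ℕ):ℝ)
            = ((((V i).filter fun j' : Fin m => (j':ℕ) < c ((π b).castSucc)).card : ℕ):ℝ)
              + ((((V i).filter fun t : Fin m =>
                c ((π b).castSucc) ≤ (t:ℕ) ∧ (t:ℕ) < c ((π b).succ)).card : ℕ):ℝ) := by
          exact_mod_cast congrArg (Nat.cast : ℕ → ℝ) hcb
        rw [hb1, hb2] at hcbR
        linarith
      rw [ge_iff_le, hdv i, hdv j, hcount i, hcount j,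
        div_le_div_iff₀ (hμR i) (hμR i)]
      have hint := hzgap i (π j)
      have hintR : ((⌈r i (π j).succ - s i⌉ : ℤ):ℝ) - ((⌈r i (π j).castSucc - s i⌉:ℤ):ℝ)
          ≤ ((⌈r i (π i).succ - s i⌉ : ℤ):ℝ) - ((⌈r i (π i).castSucc - s i⌉:ℤ):ℝ) := by
        exact_mod_cast hint
      nlinarith [hμR i]
end

section
/- Let v_1,…,v_n be normalized piecewise constant valuations on [0,1], each with at most q value-blocks (maximal intervals of positive constant density). Let 0 < ε ≤ 1 and let δ ≤ ε/(q+2) be such that 1/δ is a positive integer. For each agent i and each value-block [a,b] of height h of v_i, partition [a,b] from the left into consecutive sub-intervals of v_i-value exactly δ (i.e., of length δ/h), discarding the incomplete remainder, and place an item valued by agent i at the midpoint of each complete sub-interval; then remove items (in any way) so that every agent values exactly 1/δ − q items, and order the remaining items on a line by their positions in [0,1] (ties between coinciding positions broken arbitrarily). In the resulting discrete instance every item is valued by exactly one agent and all agents value the same number of items. Then for every contiguous envy-free allocation of this discrete instance, placing each continuous cut at any point lying weakly between the positions in [0,1] of the two items adjacent to the corresponding discrete cut (and placing the outer cuts at 0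 and 1, and assigning the resulting intervals to the agents in the same left-to-right order as the discrete blocks) yields a contiguous ε-envy-free allocation of [0,1] with respect to (v_1,…,v_n). -/
open MeasureTheory


/-- The piecewise constant density of agent `i`, given for each agent a family of at most
`q` value-blocks `[a i j, b i j]` of height `h i j`. -/
noncomputable def pcDensity {n q : ℕ} (a b h : Fin n → Fin q → ℝ) (i : Fin n) (x : ℝ) : ℝ :=
  ∑ j : Fin q, if a i j ≤ x ∧ x ≤ b i j then h i j else 0

lemma ite_eq_indicator (A B H : ℝ) :
    (fun x => if A ≤ x ∧ x ≤ B then H else 0) = Set.indicator (Set.Icc A B) (fun _ => H) := by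
  funext x; rw [Set.indicator_apply]; simp [Set.mem_Icc]

lemma term_ii (A B H s t : ℝ) :
    IntervalIntegrable (fun x => if A ≤ x ∧ x ≤ B then H else 0) volume s t := by
  rw [ite_eq_indicator]
  rw [intervalIntegrable_iff]
  have hfin : volume (Set.uIoc s t) < ⊤ := by
    rw [Set.uIoc, Real.volume_Ioc]; exact ENNReal.ofReal_lt_top
  exact (integrableOn_const hfin.ne (by simp)).indicator measurableSet_Icc

lemma term_int_within (A B H s t : ℝ) (hs : A ≤ s) (hst : s ≤ t) (htB : t ≤ B) :
    (∫ x in s..t, if A ≤ x ∧ x ≤ B then H else 0) = H * (t - s) := by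
  rw [intervalIntegral.integral_congr (g := fun _ => H)]
  · rw [intervalIntegral.integral_const]; rw [smul_eq_mul]; ring
  · intro x hx
    rw [Set.uIcc_of_le hst] at hx
    simp only [Set.mem_Icc] at hx
    simp [le_trans hs hx.1, le_trans hx.2 htB]

lemma term_int_01 (A B H : ℝ) (h0 : 0 ≤ A) (hAB : A ≤ B) (hB1 : B ≤ 1) :
    (∫ x in (0:ℝ)..1, if A ≤ x ∧ x ≤ B then H else 0) = H * (B - A) := by
  rw [ite_eq_indicator, intervalIntegral.integral_of_le (by norm_num : (0:ℝ) ≤ 1),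
      MeasureTheory.integral_indicator measurableSet_Icc, MeasureTheory.setIntegral_const,
      measureReal_def, Measure.restrict_apply measurableSet_Icc]
  have hvol : volume (Set.Icc A B ∩ Set.Ioc 0 1) = ENNReal.ofReal (B - A) := by
    apply le_antisymm
    · calc volume (Set.Icc A B ∩ Set.Ioc 0 1) ≤ volume (Set.Icc A B) :=
            measure_mono Set.inter_subset_left
        _ = ENNReal.ofReal (B - A) := Real.volume_Icc
    · calc ENNReal.ofReal (B - A) = volume (Set.Ioc A B) := Real.volume_Ioc.symm
        _ ≤ volume (Set.Icc A B ∩ Set.Ioc 0 1) := by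
            apply measure_mono
            intro x hx
            exact ⟨⟨hx.1.le, hx.2⟩, lt_of_le_of_lt h0 hx.1, le_trans hx.2 hB1⟩
  rw [hvol, ENNReal.toReal_ofReal (by linarith), smul_eq_mul]; ring

lemma pc_ii {n q : ℕ} (a b h : Fin n → Fin q → ℝ) (i : Fin n) (s t : ℝ) :
    IntervalIntegrable (fun x => pcDensity a b h i x) volume s t := by
  have h1 := IntervalIntegrable.sum (μ := volume) (a := s) (b := t) Finset.univ
    (f := fun (j : Fin q) (x : ℝ) => if a i j ≤ x ∧ x ≤ b i j then h i j else 0)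
    (fun j _ => term_ii _ _ _ s t)
  have h2 : (fun x => pcDensity a b h i x)
      = ∑ j : Fin q, fun (x:ℝ) => if a i j ≤ x ∧ x ≤ b i j then h i j else 0 := by
    funext x; simp [pcDensity, Finset.sum_apply]
  rw [h2]; exact h1

lemma pc_nn {n q : ℕ} (a b h : Fin n → Fin q → ℝ) (hh : ∀ i j, 0 ≤ h i j) (i : Fin n) (x : ℝ) :
    0 ≤ pcDensity a b h i x := by
  apply Finset.sum_nonneg
  intro j _
  split
  · exact hh i j
  · exact le_refl 0

lemma pc_lb {n q : ℕ} (a b h : Fin n → Fin q → ℝ) (hh : ∀ i j, 0 ≤ h i j) (i : Fin n) (j : Fin q)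
    (s t : ℝ) (hs : a i j ≤ s) (hst : s ≤ t) (ht : t ≤ b i j) :
    h i j * (t - s) ≤ ∫ x in s..t, pcDensity a b h i x := by
  simp only [pcDensity]
  rw [intervalIntegral.integral_finset_sum (fun j' _ => term_ii _ _ _ s t)]
  rw [show h i j * (t - s) = ∫ x in s..t, if a i j ≤ x ∧ x ≤ b i j then h i j else 0 from
    (term_int_within _ _ _ _ _ hs hst ht).symm]
  apply Finset.single_le_sum (f := fun j' => ∫ x in s..t, if a i j' ≤ x ∧ x ≤ b i j' then h i j' else 0)
    _ (Finset.mem_univ j)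
  intro j' _
  apply intervalIntegral.integral_nonneg hst
  intro x _
  split
  · exact hh i j'
  · exact le_refl 0

lemma pc_total {n q : ℕ} (a b h : Fin n → Fin q → ℝ) (i : Fin n)
    (hab : ∀ i j, a i j ≤ b i j) (ha0 : ∀ i j, 0 ≤ a i j) (hb1 : ∀ i j, b i j ≤ 1) :
    (∫ x in (0:ℝ)..1, pcDensity a b h i x) = ∑ j : Fin q, (b i j - a i j) * h i j := by
  simp only [pcDensity]
  rw [intervalIntegral.integral_finset_sum (fun j' _ => term_ii _ _ _ 0 1)]
  apply Finset.sum_congr rfl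
  intro j _
  rw [term_int_01 _ _ _ (ha0 i j) (hab i j) (hb1 i j)]
  ring


lemma sum_intervals_le (f : ℝ → ℝ) (hf : ∀ x, 0 ≤ f x)
    (hfi : ∀ s t : ℝ, IntervalIntegrable f volume s t)
    {ι : Type*} [LinearOrder ι] (u v : ι → ℝ) (S : ℝ) :
    ∀ (K : ℕ) (T : Finset ι) (E : ℝ), T.card = K → S ≤ E →
    (∀ t ∈ T, u t ≤ v t) → (∀ t ∈ T, S ≤ u t) → (∀ t ∈ T, v t ≤ E) →
    (∀ t ∈ T, ∀ t' ∈ T, t < t' → v t ≤ u t') →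
    ∑ t ∈ T, (∫ x in (u t)..(v t), f x) ≤ ∫ x in S..E, f x := by
  intro K
  induction K with
  | zero =>
    intro T E hcard hSE _ _ _ _
    rw [Finset.card_eq_zero.mp hcard, Finset.sum_empty]
    exact intervalIntegral.integral_nonneg hSE (fun x _ => hf x)
  | succ K ih =>
    intro T E hcard hSE h1 h2 h3 h4
    have hne : T.Nonempty := Finset.card_pos.mp (by omega)
    set tm := T.max' hne with htm
    have hmem : tm ∈ T := T.max'_mem hne
    have hkey : ∑ t ∈ T.erase tm, (∫ x in (u t)..(v t), f x) ≤ ∫ x in S..(u tm), f x := by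
      apply ih (T.erase tm) (u tm)
      · rw [Finset.card_erase_of_mem hmem, hcard]; rfl
      · exact h2 tm hmem
      · exact fun t ht => h1 t (Finset.mem_of_mem_erase ht)
      · exact fun t ht => h2 t (Finset.mem_of_mem_erase ht)
      · intro t ht
        have htT := Finset.mem_of_mem_erase ht
        have : t < tm := lt_of_le_of_ne (T.le_max' t htT) (Finset.ne_of_mem_erase ht)
        exact h4 t htT tm hmem this
      · intro t ht t' ht' hlt
        exact h4 t (Finset.mem_of_mem_erase ht) t' (Finset.mem_of_mem_erase ht') hlt
    have hsplit : (∫ x in S..(u tm), f x) + (∫ x in (u tm)..(v tm), f x)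
        + (∫ x in (v tm)..E, f x) = ∫ x in S..E, f x := by
      rw [intervalIntegral.integral_add_adjacent_intervals (hfi _ _) (hfi _ _),
          intervalIntegral.integral_add_adjacent_intervals (hfi _ _) (hfi _ _)]
    have hlast : 0 ≤ ∫ x in (v tm)..E, f x :=
      intervalIntegral.integral_nonneg (h3 tm hmem) (fun x _ => hf x)
    rw [← Finset.sum_erase_add T _ hmem]
    linarith

lemma main_est (f : ℝ → ℝ) (hf : ∀ x, 0 ≤ f x)
    (hfi : ∀ s t : ℝ, IntervalIntegrable f volume s t)
    {ι : Type*} [LinearOrder ι] (T : Finset ι) (pos l r : ι → ℝ) (δ : ℝ) (hδpos : 0 < δ)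
    (S E : ℝ) (hSE : S ≤ E)
    (hlp : ∀ t ∈ T, l t ≤ pos t) (hpr : ∀ t ∈ T, pos t ≤ r t)
    (hSpos : ∀ t ∈ T, S ≤ pos t) (hposE : ∀ t ∈ T, pos t ≤ E)
    (horder : ∀ t ∈ T, ∀ t' ∈ T, t < t' → r t ≤ l t')
    (hwid : ∀ t ∈ T, 0 < r t - l t)
    (hhalf : ∀ t ∈ T, pos t - l t = r t - pos t)
    (hdens : ∀ t ∈ T, ∀ u' v' : ℝ, l t ≤ u' → u' ≤ v' → v' ≤ r t →
      δ * ((v' - u') / (r t - l t)) ≤ ∫ x in u'..v', f x)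
    (cL cR : ℝ) (hcL0 : 0 ≤ cL) (hcR0 : 0 ≤ cR)
    (hcL : cL = δ / 2 ∨ ∀ t ∈ T, S ≤ l t)
    (hcR : cR = δ / 2 ∨ ∀ t ∈ T, r t ≤ E) :
    δ * T.card - cL - cR ≤ ∫ x in S..E, f x := by
  rcases T.eq_empty_or_nonempty with hT | hne
  · subst hT
    simp only [Finset.card_empty, Nat.cast_zero, mul_zero]
    have h0 : (0:ℝ) ≤ ∫ x in S..E, f x :=
      intervalIntegral.integral_nonneg hSE (fun x _ => hf x)
    linarith
  · set tmin := T.min' hne with htmin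
    set tmax := T.max' hne with htmax
    have hterm : ∀ t ∈ T,
        δ - (if t = tmin then cL else 0) - (if t = tmax then cR else 0)
          ≤ ∫ x in (max (l t) S)..(min (r t) E), f x := by
      intro t ht
      have hW := hwid t ht
      have hup : max (l t) S ≤ pos t := max_le (hlp t ht) (hSpos t ht)
      have hpv : pos t ≤ min (r t) E := le_min (hpr t ht) (hposE t ht)
      have base := hdens t ht _ _ (le_max_left _ _) (hup.trans hpv) (min_le_left _ _)
      have hhalf' : pos t - l t = (r t - l t) / 2 := by
        have := hhalf t ht; linarith
      have hstep : ∀ X : ℝ, X ≤ min (r t) E - max (l t) S →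
          δ * (X / (r t - l t)) ≤ ∫ x in (max (l t) S)..(min (r t) E), f x := by
        intro X hX
        refine le_trans ?_ base
        apply mul_le_mul_of_nonneg_left _ hδpos.le
        exact (div_le_div_iff_of_pos_right hW).mpr hX
      have hif1nn : 0 ≤ (if t = tmin then cL else 0) := by split <;> [exact hcL0; exact le_refl 0]
      have hif2nn : 0 ≤ (if t = tmax then cR else 0) := by split <;> [exact hcR0; exact le_refl 0]
      have hA : S ≤ l t ∨ ((if t = tmin then cL else 0) = cL ∧ cL = δ / 2) := by
        by_cases h1 : t = tmin
        · rcases hcL with hc | hc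
          · exact Or.inr ⟨if_pos h1, hc⟩
          · exact Or.inl (hc t ht)
        · refine Or.inl ?_
          have hmm : tmin ∈ T := T.min'_mem hne
          have hlt : tmin < t := lt_of_le_of_ne (T.min'_le t ht) (Ne.symm h1)
          exact le_trans (hSpos tmin hmm) (le_trans (hpr tmin hmm) (horder tmin hmm t ht hlt))
      have hB : r t ≤ E ∨ ((if t = tmax then cR else 0) = cR ∧ cR = δ / 2) := by
        by_cases h1 : t = tmax
        · rcases hcR with hc | hc
          · exact Or.inr ⟨if_pos h1, hc⟩
          · exact Or.inl (hc t ht)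
        · refine Or.inl ?_
          have hmm : tmax ∈ T := T.max'_mem hne
          have hlt : t < tmax := lt_of_le_of_ne (T.le_max' t ht) h1
          exact le_trans (horder t ht tmax hmm hlt) (le_trans (hlp tmax hmm) (hposE tmax hmm))
      rcases hA with hA | ⟨eA1, eA2⟩ <;> rcases hB with hB | ⟨eB1, eB2⟩
      · -- no truncation
        have hu : max (l t) S = l t := max_eq_left hA
        have hv : min (r t) E = r t := min_eq_left hB
        have := hstep (r t - l t) (by rw [hu, hv])
        rw [div_self hW.ne', mul_one] at this
        linarith
      · -- left ok, right truncated
        have hu : max (l t) S = l t := max_eq_left hA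
        have := hstep ((r t - l t) / 2) (by rw [hu]; linarith)
        rw [show (r t - l t) / 2 / (r t - l t) = 1 / 2 by field_simp] at this
        linarith
      · -- right ok, left truncated
        have hv : min (r t) E = r t := min_eq_left hB
        have := hstep ((r t - l t) / 2) (by rw [hv]; linarith)
        rw [show (r t - l t) / 2 / (r t - l t) = 1 / 2 by field_simp] at this
        linarith
      · have := hstep 0 (by linarith)
        rw [zero_div, mul_zero] at this
        linarith
    calc δ * T.card - cL - cR
        = ∑ t ∈ T, (δ - (if t = tmin then cL else 0) - (if t = tmax then cR else 0)) := by
          rw [Finset.sum_sub_distrib, Finset.sum_sub_distrib, Finset.sum_const,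
              Finset.sum_ite_eq' T tmin (fun _ => cL), Finset.sum_ite_eq' T tmax (fun _ => cR),
              if_pos (T.min'_mem hne), if_pos (T.max'_mem hne), nsmul_eq_mul, mul_comm]
      _ ≤ ∑ t ∈ T, ∫ x in (max (l t) S)..(min (r t) E), f x := Finset.sum_le_sum hterm
      _ ≤ ∫ x in S..E, f x := by
          apply sum_intervals_le f hf hfi _ _ S T.card T E rfl hSE
          · intro t ht
            exact le_trans (max_le (hlp t ht) (hSpos t ht)) (le_min (hpr t ht) (hposE t ht))
          · intro t _; exact le_max_right _ _
          · intro t _; exact min_le_right _ _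
          · intro t ht t' ht' hlt
            exact le_trans (min_le_left _ _) (le_trans (horder t ht t' ht' hlt) (le_max_left _ _))


set_option maxHeartbeats 1600000 in
/-- Discretization of piecewise constant valuations: each value-block is
partitioned from the left into sub-intervals of value exactly `δ` (where `δ ≤ ε/(q+2)` and
`1/δ = P ∈ ℕ`), the incomplete remainder is discarded, an item valued by agent `i` is placed
at the midpoint of each complete sub-interval of a block of `v i`, and items are removed so
that every agent values exactly `P - q` items; the items are ordered on a line by their
positions (monotonically, ties broken arbitrarily). Then every contiguous envy-free
allocation of the resulting discrete instance, together with continuous cuts placed weakly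
between the positions of the two items adjacent to each discrete cut (outer cuts at `0` and
`1`, pieces assigned in the same left-to-right order), yields a contiguous `ε`-envy-free
allocation of `[0,1]`. -/
theorem discretization_yields_approx_envy_free
    (n q : ℕ) (hn : 0 < n) (hq : 0 < q)
    (a b h : Fin n → Fin q → ℝ)
    (hab : ∀ i j, a i j ≤ b i j) (ha0 : ∀ i j, 0 ≤ a i j) (hb1 : ∀ i j, b i j ≤ 1)
    (hh : ∀ i j, 0 ≤ h i j)
    (hdisj : ∀ i (j j' : Fin q), j ≠ j' → b i j ≤ a i j' ∨ b i j' ≤ a i j)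
    (hnorm : ∀ i, ∑ j : Fin q, (b i j - a i j) * h i j = 1)
    (ε δ : ℝ) (hε0 : 0 < ε) (hε1 : ε ≤ 1) (hδpos : 0 < δ) (hδ : δ ≤ ε / (q + 2))
    (P : ℕ) (hP : 0 < P) (hPδ : (P : ℝ) = 1 / δ)
    -- the discrete items: positions and owning agents
    (pos : Fin (n * (P - q)) → ℝ) (ag : Fin (n * (P - q)) → Fin n)
    (hposmono : Monotone pos)
    (hcard : ∀ i : Fin n,
      (Finset.univ.filter fun t => ag t = i).card = P - q)
    (hmid : ∀ t, ∃ (jb : Fin q) (s : ℕ),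
      0 < h (ag t) jb ∧
      a (ag t) jb + ((s : ℝ) + 1) * δ / h (ag t) jb ≤ b (ag t) jb ∧
      pos t = a (ag t) jb + ((s : ℝ) + 1 / 2) * δ / h (ag t) jb)
    (hinj : ∀ t t', t ≠ t' → ag t = ag t' → pos t ≠ pos t')
    -- a contiguous envy-free allocation of the discrete instance
    (c : Fin (n + 1) → ℕ) (σ : Equiv.Perm (Fin n))
    (hcmono : Monotone c) (hc0 : c 0 = 0) (hcl : c (Fin.last n) = n * (P - q))
    (hDEF : ∀ i j : Fin n,
      ((Finset.univ.filter fun t => ag t = i ∧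
          c (σ i).castSucc ≤ t.val ∧ t.val < c (σ i).succ).card : ℝ) / ((P - q : ℕ) : ℝ) ≥
      ((Finset.univ.filter fun t => ag t = i ∧
          c (σ j).castSucc ≤ t.val ∧ t.val < c (σ j).succ).card : ℝ) / ((P - q : ℕ) : ℝ))
    -- continuous cuts placed weakly between the items adjacent to each discrete cut
    (y : Fin (n + 1) → ℝ)
    (hymono : Monotone y) (hy0 : y 0 = 0) (hy1 : y (Fin.last n) = 1)
    (hbetween : ∀ k : Fin (n + 1), k ≠ 0 → k ≠ Fin.last n →
      (∀ t, t.val < c k → pos t ≤ y k) ∧ (∀ t, c k ≤ t.val → y k ≤ pos t)) :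
    ∀ i j : Fin n,
      (∫ x in (y (σ i).castSucc)..(y (σ i).succ), pcDensity a b h i x) ≥
        (∫ x in (y (σ j).castSucc)..(y (σ j).succ), pcDensity a b h i x) - ε := by
  intro i j
  classical
  -- basic arithmetic facts
  have hεδ' : δ * (q:ℝ) + 2*δ ≤ ε := by
    have h1 : δ * ((q:ℝ)+2) ≤ ε := by
      rw [le_div_iff₀ (show (0:ℝ) < (q:ℝ)+2 by positivity)] at hδ; linarith
    linarith
  have hq2 : (q:ℝ) + 2 ≤ (P:ℝ) := by
    rw [hPδ, le_div_iff₀ hδpos]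
    nlinarith [hεδ', hε1]
  have hqP : q < P := by
    have h' : q + 2 ≤ P := by exact_mod_cast hq2
    omega
  have hPqcast : ((P - q : ℕ) : ℝ) = (P:ℝ) - q := by
    rw [Nat.cast_sub (le_of_lt hqP)]
  have hPqpos : (0:ℝ) < ((P - q : ℕ):ℝ) := by rw [hPqcast]; linarith
  have hδP : δ * (P:ℝ) = 1 := by rw [hPδ]; field_simp
  -- nonnegativity / integrability of the density
  have hFnn : ∀ x, 0 ≤ pcDensity a b h i x := pc_nn a b h hh i
  have hFi : ∀ s t : ℝ, IntervalIntegrable (fun x => pcDensity a b h i x) volume s t :=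
    pc_ii a b h i
  -- choose the sub-interval data for each item
  choose jb ss hhpos hre hposeq using hmid
  set lf : Fin (n * (P - q)) → ℝ :=
    fun t => a (ag t) (jb t) + (ss t : ℝ) * δ / h (ag t) (jb t) with hlf
  set rf : Fin (n * (P - q)) → ℝ :=
    fun t => a (ag t) (jb t) + ((ss t : ℝ) + 1) * δ / h (ag t) (jb t) with hrf
  have Hal : ∀ t, a (ag t) (jb t) ≤ lf t := by
    intro t
    have h0 : 0 ≤ (ss t : ℝ) * δ / h (ag t) (jb t) :=
      div_nonneg (mul_nonneg (Nat.cast_nonneg _) hδpos.le) (hhpos t).le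
    simp only [hlf]; linarith
  have Hrb : ∀ t, rf t ≤ b (ag t) (jb t) := by
    intro t; simp only [hrf]; exact hre t
  have Hlp : ∀ t, lf t ≤ pos t := by
    intro t
    rw [hposeq t]
    simp only [hlf]
    have h2 : (ss t:ℝ) * δ / h (ag t) (jb t) ≤ ((ss t:ℝ) + 1/2) * δ / h (ag t) (jb t) := by
      rw [div_le_div_iff_of_pos_right (hhpos t)]; nlinarith [hδpos.le]
    linarith
  have Hpr : ∀ t, pos t ≤ rf t := by
    intro t
    rw [hposeq t]
    simp only [hrf]
    have h2 : ((ss t:ℝ) + 1/2) * δ / h (ag t) (jb t) ≤ ((ss t:ℝ) + 1) * δ / h (ag t) (jb t) := by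
      rw [div_le_div_iff_of_pos_right (hhpos t)]; nlinarith [hδpos.le]
    linarith
  have Hw : ∀ t, rf t - lf t = δ / h (ag t) (jb t) := by
    intro t; simp only [hlf, hrf]; ring
  have Hwpos : ∀ t, 0 < rf t - lf t := by
    intro t; rw [Hw t]; exact div_pos hδpos (hhpos t)
  have Hhalf : ∀ t, pos t - lf t = rf t - pos t := by
    intro t; rw [hposeq t]; simp only [hlf, hrf]; ring
  have Hl0 : ∀ t, 0 ≤ lf t := fun t => le_trans (ha0 _ _) (Hal t)
  have Hr1 : ∀ t, rf t ≤ 1 := fun t => le_trans (Hrb t) (hb1 _ _)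
  have Hpos0 : ∀ t, 0 ≤ pos t := fun t => le_trans (Hl0 t) (Hlp t)
  have Hpos1 : ∀ t, pos t ≤ 1 := fun t => le_trans (Hpr t) (Hr1 t)
  -- disjointness / ordering of the sub-intervals of agent i
  have Horder : ∀ t t', ag t = i → ag t' = i → t < t' → rf t ≤ lf t' := by
    intro t t' h1 h2 hlt
    have hag : ag t' = ag t := h2.trans h1.symm
    have hpp : pos t < pos t' :=
      lt_of_le_of_ne (hposmono hlt.le) (hinj t t' (ne_of_lt hlt) (h1.trans h2.symm))
    by_cases hjj : jb t' = jb t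
    · have hH := hhpos t
      have e1 := hposeq t
      have e2 := hposeq t'
      rw [hag, hjj] at e2
      have hlt2 : ((ss t:ℝ) + 1/2) * δ / h (ag t) (jb t)
          < ((ss t':ℝ) + 1/2) * δ / h (ag t) (jb t) := by
        rw [e1, e2] at hpp; linarith
      have hss : (ss t : ℝ) < ss t' := by
        rw [div_lt_div_iff_of_pos_right hH] at hlt2
        have h3 := (mul_lt_mul_iff_left₀ hδpos).mp hlt2
        linarith
      have hss' : (ss t:ℝ) + 1 ≤ (ss t' : ℝ) := by
        have h4 : ss t < ss t' := by exact_mod_cast hss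
        have h5 : ss t + 1 ≤ ss t' := h4
        exact_mod_cast h5
      simp only [hlf, hrf, hag, hjj]
      have h6 : ((ss t:ℝ)+1) * δ / h (ag t) (jb t) ≤ (ss t':ℝ) * δ / h (ag t) (jb t) := by
        rw [div_le_div_iff_of_pos_right hH]; nlinarith [hδpos.le]
      linarith
    · have hd := hdisj i (jb t) (jb t') (fun he => hjj he.symm)
      rcases hd with hd | hd
      · have h3 : rf t ≤ b i (jb t) := by rw [← h1]; exact Hrb t
        have h4 : a i (jb t') ≤ lf t' := by rw [← h2]; exact Hal t'
        linarith
      · exfalso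
        have h3 : rf t' ≤ b i (jb t') := by rw [← h2]; exact Hrb t'
        have h4 : a i (jb t) ≤ lf t := by rw [← h1]; exact Hal t
        linarith [Hpr t', Hlp t]
  -- value density of sub-intervals of agent i
  have Hdens : ∀ t, ag t = i → ∀ u' v', lf t ≤ u' → u' ≤ v' → v' ≤ rf t →
      δ * ((v' - u') / (rf t - lf t)) ≤ ∫ x in u'..v', pcDensity a b h i x := by
    intro t hagt u' v' h1 h2 h3
    have hH : 0 < h i (jb t) := by rw [← hagt]; exact hhpos t
    have ha' : a i (jb t) ≤ u' := le_trans (by rw [← hagt]; exact Hal t) h1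
    have hb' : v' ≤ b i (jb t) := le_trans h3 (by rw [← hagt]; exact Hrb t)
    have hlow := pc_lb a b h hh i (jb t) u' v' ha' h2 hb'
    have hrl : rf t - lf t = δ / h i (jb t) := by rw [← hagt]; exact Hw t
    rw [hrl]
    have he : δ * ((v' - u') / (δ / h i (jb t))) = h i (jb t) * (v' - u') := by
      have hδne : δ ≠ 0 := hδpos.ne'
      have hHne : h i (jb t) ≠ 0 := hH.ne'
      field_simp
    rw [he]; exact hlow
  -- cut-position properties, extended to the outer cuts
  have Lp : ∀ k : Fin (n+1), ∀ t, t.val < c k → pos t ≤ y k := by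
    intro k t ht
    by_cases hk0 : k = 0
    · subst hk0; rw [hc0] at ht; exact absurd ht (by omega)
    by_cases hkl : k = Fin.last n
    · subst hkl; rw [hy1]; exact Hpos1 t
    · exact (hbetween k hk0 hkl).1 t ht
  have Up : ∀ k : Fin (n+1), ∀ t, c k ≤ t.val → y k ≤ pos t := by
    intro k t ht
    by_cases hk0 : k = 0
    · subst hk0; rw [hy0]; exact Hpos0 t
    by_cases hkl : k = Fin.last n
    · rw [hkl, hcl] at ht
      have := t.isLt
      exact absurd ht (by omega)
    · exact (hbetween k hk0 hkl).2 t ht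
  have hy_nonneg : ∀ k, 0 ≤ y k := by
    intro k; rw [← hy0]; exact hymono (Fin.zero_le k)
  have hy_le1 : ∀ k, y k ≤ 1 := by
    intro k; rw [← hy1]; exact hymono (Fin.le_last k)
  -- the relevant item sets
  have hEF := hDEF i j
  set Town := Finset.univ.filter (fun t => ag t = i ∧
      c (σ i).castSucc ≤ t.val ∧ t.val < c (σ i).succ) with hTown
  set Toth := Finset.univ.filter (fun t => ag t = i ∧
      c (σ j).castSucc ≤ t.val ∧ t.val < c (σ j).succ) with hToth
  set TA := Finset.univ.filter (fun t : Fin (n * (P - q)) => ag t = i ∧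
      t.val < c (σ j).castSucc) with hTA
  set TB := Finset.univ.filter (fun t : Fin (n * (P - q)) => ag t = i ∧
      c (σ j).succ ≤ t.val) with hTB
  -- counting: TA + Toth + TB = P - q
  have hc12 : c (σ j).castSucc ≤ c (σ j).succ := hcmono (Fin.castSucc_le_succ (σ j))
  have hABC : TA.card + Toth.card + TB.card = P - q := by
    rw [show TA.card + Toth.card + TB.card
        = (Finset.univ.filter (fun t : Fin (n * (P - q)) => ag t = i)).card from ?_]
    · exact hcard i
    rw [hTA, hToth, hTB]
    set c1 := c (σ j).castSucc
    set c2 := c (σ j).succ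
    set S0 := Finset.univ.filter (fun t : Fin (n * (P - q)) => ag t = i) with hS0
    have k1 : (S0.filter (fun t => t.val < c1)).card
        + (S0.filter (fun t => ¬ t.val < c1)).card = S0.card :=
      Finset.card_filter_add_card_filter_not _
    have k2 : ((S0.filter (fun t => ¬ t.val < c1)).filter (fun t => t.val < c2)).card
        + ((S0.filter (fun t => ¬ t.val < c1)).filter (fun t => ¬ t.val < c2)).card
        = (S0.filter (fun t => ¬ t.val < c1)).card :=
      Finset.card_filter_add_card_filter_not _
    have e1 : S0.filter (fun t => t.val < c1)
        = Finset.univ.filter (fun t : Fin (n * (P - q)) => ag t = i ∧ t.val < c1) := by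
      rw [hS0, Finset.filter_filter]
    have e2 : (S0.filter (fun t => ¬ t.val < c1)).filter (fun t => t.val < c2)
        = Finset.univ.filter (fun t : Fin (n * (P - q)) => ag t = i ∧ c1 ≤ t.val ∧ t.val < c2) := by
      rw [hS0, Finset.filter_filter, Finset.filter_filter]
      apply Finset.filter_congr
      intro x _
      simp only [not_lt]
    have e3 : (S0.filter (fun t => ¬ t.val < c1)).filter (fun t => ¬ t.val < c2)
        = Finset.univ.filter (fun t : Fin (n * (P - q)) => ag t = i ∧ c2 ≤ t.val) := by
      rw [hS0, Finset.filter_filter, Finset.filter_filter]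
      apply Finset.filter_congr
      intro x _
      simp only [not_lt, eq_iff_iff]
      constructor
      · rintro ⟨ha1, ha2, ha3⟩; exact ⟨ha1, ha3⟩
      · rintro ⟨ha1, ha3⟩; exact ⟨ha1, le_trans hc12 ha3, ha3⟩
    rw [e1] at k1
    rw [e2, e3] at k2
    omega
  -- the three value estimates
  have hLR1 : y (σ i).castSucc ≤ y (σ i).succ := hymono (Fin.castSucc_le_succ (σ i))
  have hLR2 : y (σ j).castSucc ≤ y (σ j).succ := hymono (Fin.castSucc_le_succ (σ j))
  have hown : δ * (Town.card : ℝ) - δ/2 - δ/2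
      ≤ ∫ x in (y (σ i).castSucc)..(y (σ i).succ), pcDensity a b h i x :=
    main_est (fun x => pcDensity a b h i x) hFnn hFi Town pos lf rf δ hδpos
      (y (σ i).castSucc) (y (σ i).succ) hLR1
      (fun t _ => Hlp t) (fun t _ => Hpr t)
      (fun t ht => Up _ t ((Finset.mem_filter.mp ht).2.2.1))
      (fun t ht => Lp _ t ((Finset.mem_filter.mp ht).2.2.2))
      (fun t ht t' ht' hlt =>
        Horder t t' (Finset.mem_filter.mp ht).2.1 (Finset.mem_filter.mp ht').2.1 hlt)
      (fun t _ => Hwpos t) (fun t _ => Hhalf t)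
      (fun t ht => Hdens t (Finset.mem_filter.mp ht).2.1)
      (δ/2) (δ/2) (by linarith) (by linarith) (Or.inl rfl) (Or.inl rfl)
  have hA : δ * (TA.card : ℝ) - 0 - δ/2
      ≤ ∫ x in (0:ℝ)..(y (σ j).castSucc), pcDensity a b h i x :=
    main_est (fun x => pcDensity a b h i x) hFnn hFi TA pos lf rf δ hδpos
      0 (y (σ j).castSucc) (hy_nonneg _)
      (fun t _ => Hlp t) (fun t _ => Hpr t)
      (fun t _ => Hpos0 t)
      (fun t ht => Lp _ t ((Finset.mem_filter.mp ht).2.2))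
      (fun t ht t' ht' hlt =>
        Horder t t' (Finset.mem_filter.mp ht).2.1 (Finset.mem_filter.mp ht').2.1 hlt)
      (fun t _ => Hwpos t) (fun t _ => Hhalf t)
      (fun t ht => Hdens t (Finset.mem_filter.mp ht).2.1)
      0 (δ/2) le_rfl (by linarith) (Or.inr (fun t _ => Hl0 t)) (Or.inl rfl)
  have hB : δ * (TB.card : ℝ) - δ/2 - 0
      ≤ ∫ x in (y (σ j).succ)..(1:ℝ), pcDensity a b h i x :=
    main_est (fun x => pcDensity a b h i x) hFnn hFi TB pos lf rf δ hδpos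
      (y (σ j).succ) 1 (hy_le1 _)
      (fun t _ => Hlp t) (fun t _ => Hpr t)
      (fun t ht => Up _ t ((Finset.mem_filter.mp ht).2.2))
      (fun t _ => Hpos1 t)
      (fun t ht t' ht' hlt =>
        Horder t t' (Finset.mem_filter.mp ht).2.1 (Finset.mem_filter.mp ht').2.1 hlt)
      (fun t _ => Hwpos t) (fun t _ => Hhalf t)
      (fun t ht => Hdens t (Finset.mem_filter.mp ht).2.1)
      (δ/2) 0 (by linarith) le_rfl (Or.inl rfl) (Or.inr (fun t _ => Hr1 t))
  -- total value decomposition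
  have htot : (∫ x in (0:ℝ)..(y (σ j).castSucc), pcDensity a b h i x)
      + (∫ x in (y (σ j).castSucc)..(y (σ j).succ), pcDensity a b h i x)
      + (∫ x in (y (σ j).succ)..(1:ℝ), pcDensity a b h i x) = 1 := by
    rw [intervalIntegral.integral_add_adjacent_intervals (hFi _ _) (hFi _ _),
        intervalIntegral.integral_add_adjacent_intervals (hFi _ _) (hFi _ _)]
    rw [pc_total a b h i hab ha0 hb1]
    exact hnorm i
  -- the discrete envy-freeness comparison
  have hcc : (Toth.card : ℝ) ≤ (Town.card : ℝ) := by
    rw [ge_iff_le, div_le_div_iff_of_pos_right hPqpos] at hEF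
    exact hEF
  -- cast count identity
  have hcount : (TA.card : ℝ) + (Toth.card : ℝ) + (TB.card : ℝ) = (P:ℝ) - q := by
    have hc' : ((TA.card + Toth.card + TB.card : ℕ) : ℝ) = ((P - q : ℕ) : ℝ) := by
      exact_mod_cast congrArg (fun m : ℕ => (m : ℝ)) hABC
    push_cast at hc'
    rw [hPqcast] at hc'
    linarith
  have f2 : δ * (TA.card:ℝ) + δ * (Toth.card:ℝ) + δ * (TB.card:ℝ)
      = δ * (P:ℝ) - δ * (q:ℝ) := by
    calc δ * (TA.card:ℝ) + δ * (Toth.card:ℝ) + δ * (TB.card:ℝ)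
        = δ * ((TA.card:ℝ) + (Toth.card:ℝ) + (TB.card:ℝ)) := by ring
      _ = δ * ((P:ℝ) - q) := by rw [hcount]
      _ = δ * (P:ℝ) - δ * (q:ℝ) := by ring
  have f1 : δ * (Toth.card:ℝ) ≤ δ * (Town.card:ℝ) :=
    mul_le_mul_of_nonneg_left hcc hδpos.le
  linarith [hown, hA, hB, htot, f1, f2, hδP, hεδ']
end
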